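/- arXiv:1502.07823 — 5 statements merged into one kernel-verified Lean document; each statement's English description precedes it below -/
import Mathlib

section
/- Shorter truncations yield weakly better outcomes for all women: if P₁ and P₂ are truncated profiles for the manipulators such that each manipulator's women-optimal stable partner remains on her list in both, and |P₁(w)| ≤ |P₂(w)| for every manipulator w, then the men-optimal stable matching under P₁ is weakly preferred by every woman to the men-optimal stable matching under P₂. -/
open List

/-- A stable-matching instance: each agent has a strict preference order
(a duplicate-free list, earlier = more preferred) over a subset of the other side. -/
structure SMInstance (M W : Type*) where
  mpref : M → List W
  wpref : W → List M
  mnodup : ∀ m, (mpref m).Nodup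
  wnodup : ∀ w, (wpref w).Nodup

/-- A matching: a pairing of men and women (agents may be unmatched),
involutive on matched pairs. -/
structure Matching (M W : Type*) where
  μm : M → Option W
  μw : W → Option M
  consistent : ∀ m w, μm m = some w ↔ μw w = some m

section Defs

variable {M W : Type*} [DecidableEq M] [DecidableEq W]

/-- Man `m` strictly prefers woman `w` to the (possibly empty) assignment `o`. -/
def SMInstance.mPref (I : SMInstance M W) (m : M) (w : W) : Option W → Prop
  | some w' => w ∈ I.mpref m ∧ (w' ∉ I.mpref m ∨ (I.mpref m).idxOf w < (I.mpref m).idxOf w')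
  | none => w ∈ I.mpref m

/-- Woman `w` strictly prefers man `m` to the (possibly empty) assignment `o`. -/
def SMInstance.wPref (I : SMInstance M W) (w : W) (m : M) : Option M → Prop
  | some m' => m ∈ I.wpref w ∧ (m' ∉ I.wpref w ∨ (I.wpref w).idxOf m < (I.wpref w).idxOf m')
  | none => m ∈ I.wpref w

/-- Man `m` weakly prefers assignment `o₁` to assignment `o₂`. -/
def SMInstance.mWeak (I : SMInstance M W) (m : M) (o₁ o₂ : Option W) : Prop :=
  o₁ = o₂ ∨ ∃ w, o₁ = some w ∧ I.mPref m w o₂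

/-- Woman `w` weakly prefers assignment `o₁` to assignment `o₂`. -/
def SMInstance.wWeak (I : SMInstance M W) (w : W) (o₁ o₂ : Option M) : Prop :=
  o₁ = o₂ ∨ ∃ m, o₁ = some m ∧ I.wPref w m o₂

def IndivRational (I : SMInstance M W) (μ : Matching M W) : Prop :=
  ∀ m w, μ.μm m = some w → w ∈ I.mpref m ∧ m ∈ I.wpref w

def BlockingPair (I : SMInstance M W) (μ : Matching M W) (m : M) (w : W) : Prop :=
  μ.μm m ≠ some w ∧ I.mPref m w (μ.μm m) ∧ I.wPref w m (μ.μw w)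

def IsStable (I : SMInstance M W) (μ : Matching M W) : Prop :=
  IndivRational I μ ∧ ∀ m w, ¬ BlockingPair I μ m w

/-- The men-optimal stable matching (= output of men-proposing Gale–Shapley). -/
def IsMenOptimal (I : SMInstance M W) (μ : Matching M W) : Prop :=
  IsStable I μ ∧ ∀ μ', IsStable I μ' → ∀ m, I.mWeak m (μ.μm m) (μ'.μm m)

/-- The women-optimal stable matching. -/
def IsWomenOptimal (I : SMInstance M W) (μ : Matching M W) : Prop :=
  IsStable I μ ∧ ∀ μ', IsStable I μ' → ∀ w, I.wWeak w (μ.μw w) (μ'.μw w)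

/-- `I'` arises from `I` by arbitrary misreports of the women in `L`
(all men and all women outside `L` are truthful). -/
def GeneralManip (I I' : SMInstance M W) (L : Set W) : Prop :=
  I'.mpref = I.mpref ∧ ∀ w ∉ L, I'.wpref w = I.wpref w

/-- `I'` arises from `I` by truncation (prefix) misreports of the women in `L`. -/
def TruncManip (I I' : SMInstance M W) (L : Set W) : Prop :=
  GeneralManip I I' L ∧ ∀ w ∈ L, (I'.wpref w) <+: (I.wpref w)

/-- `I'` arises from `I` by permutation misreports of the women in `L`. -/
def PermManip (I I' : SMInstance M W) (L : Set W) : Prop :=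
  GeneralManip I I' L ∧ ∀ w ∈ L, (I'.wpref w).Perm (I.wpref w)

/-- Woman `w` is strictly better off in `μ₁` than in `μ₂` (true preferences). -/
def wStrictBetter (I : SMInstance M W) (w : W) (μ₁ μ₂ : Matching M W) : Prop :=
  ∃ m, μ₁.μw w = some m ∧ I.wPref w m (μ₂.μw w)

/-- The set `δ(w)` of suitors of `w` at matching `μ`: the men who prefer `w`
to their own partner in `μ`. -/
def suitorSet (I : SMInstance M W) (μ : Matching M W) (w : W) : Set M :=
  {m | I.mPref m w (μ.μm m)}

/-- The suitor graph of Kobayashi–Matsui, on vertices `M ⊕ W ⊕ {s}`. -/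
inductive SuitorEdge (I : SMInstance M W) (L : Set W) (μ : Matching M W) :
    M ⊕ W ⊕ Unit → M ⊕ W ⊕ Unit → Prop
  | partner_wm (w : W) (m : M) : μ.μw w = some m →
      SuitorEdge I L μ (Sum.inr (Sum.inl w)) (Sum.inl m)
  | partner_mw (w : W) (m : M) : μ.μw w = some m →
      SuitorEdge I L μ (Sum.inl m) (Sum.inr (Sum.inl w))
  | suitor_manip (w : W) (m : M) : w ∈ L → m ∈ suitorSet I μ w →
      SuitorEdge I L μ (Sum.inl m) (Sum.inr (Sum.inl w))
  | suitor_honest (w : W) (m : M) : w ∉ L → m ∈ suitorSet I μ w →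
      (∀ m' ∈ suitorSet I μ w, m' ≠ m → (I.wpref w).idxOf m < (I.wpref w).idxOf m') →
      SuitorEdge I L μ (Sum.inl m) (Sum.inr (Sum.inl w))
  | fromSource (w : W) : suitorSet I μ w = ∅ →
      SuitorEdge I L μ (Sum.inr (Sum.inr ())) (Sum.inr (Sum.inl w))

/-- Reachability in the suitor graph. -/
abbrev SReach (I : SMInstance M W) (L : Set W) (μ : Matching M W) :
    (M ⊕ W ⊕ Unit) → (M ⊕ W ⊕ Unit) → Prop :=
  Relation.ReflTransGen (SuitorEdge I L μ)

/-- A reduced table (shortlists) for instance `I`: sublists of the true lists,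
with mutual membership, where each man is engaged to the head of his reduced list,
each woman to the last man of hers, and every removed man is worse for the woman
than her current partner. -/
structure ReducedTable (I : SMInstance M W) where
  rm : M → List W
  rw : W → List M
  rmSub : ∀ m, (rm m).Sublist (I.mpref m)
  rwSub : ∀ w, (rw w).Sublist (I.wpref w)
  mem_iff : ∀ m w, w ∈ rm m ↔ m ∈ rw w
  engaged : ∀ m w, (rm m).head? = some w ↔ (rw w).getLast? = some m
  removed_worse : ∀ m w p, m ∈ I.wpref w → m ∉ rw w → (rw w).getLast? = some p →
      (I.wpref w).idxOf p < (I.wpref w).idxOf m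

/-- A rotation: a cyclic sequence of (distinct) men `m₀,…,m_{r-1}`
together with their current partners `w₀,…,w_{r-1}`. -/
structure Rot (M W : Type*) where
  r : ℕ
  hr : 2 ≤ r
  ms : Fin r → M
  ws : Fin r → W
  inj : Function.Injective ms

/-- Cyclic successor of an index of a rotation. -/
def Rot.nxt (R : Rot M W) (i : Fin R.r) : Fin R.r :=
  ⟨((i : ℕ) + 1) % R.r, Nat.mod_lt _ (by have := R.hr; omega)⟩

/-- The reduced list of woman `w` determined by the stable matching `μ`:
the men weakly preferred to her current partner. -/
def reducedListW (I : SMInstance M W) (μ : Matching M W) (w : W) : List M :=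
  match μ.μw w with
  | some p => (I.wpref w).filter (fun m => decide ((I.wpref w).idxOf m ≤ (I.wpref w).idxOf p))
  | none => []

/-- The reduced list of man `m` determined by the stable matching `μ`. -/
def reducedListM (I : SMInstance M W) (μ : Matching M W) (m : M) : List W :=
  (I.mpref m).filter (fun w => decide (m ∈ reducedListW I μ w))

/-- The rotation `R` is exposed in (the reduced table of) the matching `μ`:
`w_i` is first and `w_{i+1}` second on `m_i`'s reduced list. -/
def Exposed (I : SMInstance M W) (μ : Matching M W) (R : Rot M W) : Prop :=
  ∀ i, (reducedListM I μ (R.ms i)).head? = some (R.ws i) ∧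
       (reducedListM I μ (R.ms i))[1]? = some (R.ws (R.nxt i))

/-- `μ'` is the matching obtained from `μ` by eliminating the rotation `R`:
each `m_i` is now matched with `w_{i+1}`, everyone else is unchanged. -/
def ElimStep (R : Rot M W) (μ μ' : Matching M W) : Prop :=
  (∀ i, μ'.μm (R.ms i) = some (R.ws (R.nxt i))) ∧
  ∀ m, (∀ i, m ≠ R.ms i) → μ'.μm m = μ.μm m

/-- `ElimSeq I μ S μ'`: the matching `μ'` is obtained from `μ` by successively
eliminating the (exposed-at-the-time) rotations of the set `S`. -/
inductive ElimSeq (I : SMInstance M W) : Matching M W → Set (Rot M W) → Matching M W → Prop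
  | refl (μ : Matching M W) : ElimSeq I μ ∅ μ
  | step {μ μ' μ'' : Matching M W} {R : Rot M W} {S : Set (Rot M W)} :
      Exposed I μ R → ElimStep R μ μ' → ElimSeq I μ' S μ'' → ElimSeq I μ (insert R S) μ''

/-- The rotation `R` moves man `m` from woman `w` to woman `w'`. -/
def Moves (R : Rot M W) (m : M) (w w' : W) : Prop :=
  ∃ i, R.ms i = m ∧ R.ws i = w ∧ R.ws (R.nxt i) = w'

/-- `R₁` explicitly precedes `R₂`: they share a man `m` such that `R₁` moves `m`
to some woman `w` and `R₂` moves `m` away from `w`. -/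
def ExplicitPrec (R₁ R₂ : Rot M W) : Prop :=
  ∃ m w w₁ w₂, Moves R₁ m w₁ w ∧ Moves R₂ m w w₂

/-- The precedence relation `≺`: transitive closure of explicit precedence. -/
def Prec (R₁ R₂ : Rot M W) : Prop :=
  Relation.TransGen ExplicitPrec R₁ R₂

/-- `R` is a rotation of the instance `I`: it is exposed at some matching
obtained from the men-optimal matching by eliminating rotations. -/
def IsRotOf (I : SMInstance M W) (R : Rot M W) : Prop :=
  ∃ μ0 S μ', IsMenOptimal I μ0 ∧ ElimSeq I μ0 S μ' ∧ Exposed I μ' R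

/-- A closed (downward-closed under `≺`) set of rotations of the instance `I`. -/
def IsClosedSet (I : SMInstance M W) (𝓡 : Set (Rot M W)) : Prop :=
  (∀ R ∈ 𝓡, IsRotOf I R) ∧ ∀ R ∈ 𝓡, ∀ R', IsRotOf I R' → Prec R' R → R' ∈ 𝓡

/-- The closed set `𝓡` can be eliminated: the matching obtained by eliminating it
is stable w.r.t. the true profile and is the men-optimal stable matching of some
profile in which only the women of `L` misreport. -/
def CanEliminate (I : SMInstance M W) (L : Set W) (𝓡 : Set (Rot M W)) : Prop :=
  ∃ μ0 μ', IsMenOptimal I μ0 ∧ ElimSeq I μ0 𝓡 μ' ∧ IsStable I μ' ∧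
    ∃ I', GeneralManip I I' L ∧ IsMenOptimal I' μ'

/-- `R` is a maximal rotation of the set `𝓡`. -/
def MaxRot (𝓡 : Set (Rot M W)) (R : Rot M W) : Prop :=
  R ∈ 𝓡 ∧ ∀ R' ∈ 𝓡, ¬ Prec R R'

/-- Whether man `m` proposes to woman `w` in the men-proposing Gale–Shapley run
whose outcome is `μ` (he proposes to every woman he weakly prefers to his final partner). -/
def proposedToB (I : SMInstance M W) (μ : Matching M W) (m : M) (w : W) : Bool :=
  decide (w ∈ I.mpref m) &&
    (match μ.μm m with
     | none => true
     | some w' => decide ((I.mpref m).idxOf w ≤ (I.mpref m).idxOf w'))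

/-- The proposal list `Pro(w)`: all men who proposed to `w`, ordered as in her stated list. -/
def proposals (I : SMInstance M W) (μ : Matching M W) (w : W) : List M :=
  (I.wpref w).filter (fun m => proposedToB I μ m w)

/-- `μ` is feasible for the permutation-manipulation game of coalition `L`. -/
def FeasibleM (I : SMInstance M W) (L : Set W) (μ : Matching M W) : Prop :=
  IsStable I μ ∧ ∃ I', PermManip I I' L ∧ IsMenOptimal I' μ

/-- `μ` is Pareto-optimal among feasible matchings (for the women). -/
def ParetoOptimal (I : SMInstance M W) (L : Set W) (μ : Matching M W) : Prop :=
  FeasibleM I L μ ∧ ¬∃ μ', FeasibleM I L μ' ∧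
    (∀ w, I.wWeak w (μ'.μw w) (μ.μw w)) ∧ (∃ w, wStrictBetter I w μ' μ)

/-- The reported profile `I'` with induced matching `μ` is a super-strong Nash
equilibrium of the permutation-manipulation game under the feasibility assumption. -/
def SuperStrongNE (I : SMInstance M W) (L : Set W) (I' : SMInstance M W)
    (μ : Matching M W) : Prop :=
  PermManip I I' L ∧ IsMenOptimal I' μ ∧ IsStable I μ ∧
  ∀ (Ls : Set W), Ls ⊆ L → ∀ I'' μ'',
    PermManip I I'' L → (∀ w ∉ Ls, I''.wpref w = I'.wpref w) →
    IsMenOptimal I'' μ'' → IsStable I μ'' →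
    ¬((∀ l ∈ Ls, I.wWeak l (μ''.μw l) (μ.μw l)) ∧ ∃ l ∈ Ls, wStrictBetter I l μ'' μ)

end Defs


/-!
Write `J ⊑ K` when `J` and `K` share the men's lists and every woman's list in `J` is a prefix
of her list in `K`; both truncated profiles satisfy `I₁ ⊑ I₂ ⊑ I`. The women-optimal stable
matching `μW` of `I` stays stable in `I₁` and `I₂`, since every woman keeps her partner. The
heart of the argument is that `μ₁` is stable in `I₂`: a pair blocking it in `I₂` but not in `I₁`
involves a man `m` cut from `w`'s list in `I₁`. If `w` is matched in `μ₁`, she prefers her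
partner to `m`. Otherwise, by the rural hospitals theorem, `w` is single in `μW` too, and `m`,
who weakly prefers `μ₁(m)` to `μW(m)` by men-optimality, would block `μW`. Since `μ₂` is
women-pessimal among the stable matchings of `I₂`, every woman weakly prefers `μ₁` to `μ₂`.
-/

open Finset

namespace SMInstance

variable {M W : Type*}

theorem mem_mpref_of_mPref [DecidableEq W] {I : SMInstance M W} {m : M} {w : W}
    {o : Option W} (h : I.mPref m w o) : w ∈ I.mpref m := by
  cases o with
  | none => exact h
  | some _ => exact h.1

theorem mem_wpref_of_wPref [DecidableEq M] {I : SMInstance M W} {w : W} {m : M}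
    {o : Option M} (h : I.wPref w m o) : m ∈ I.wpref w := by
  cases o with
  | none => exact h
  | some _ => exact h.1

theorem mPref_congr [DecidableEq W] {I J : SMInstance M W} (h : J.mpref = I.mpref) {m : M}
    {w : W} {o : Option W} : J.mPref m w o ↔ I.mPref m w o := by
  cases o <;> simp [mPref, h]

theorem mPref_of_mPref_of_mWeak [DecidableEq W] {I : SMInstance M W} {m : M} {w : W}
    {o₁ o₂ : Option W} (h : I.mPref m w o₁) (h' : I.mWeak m o₁ o₂) : I.mPref m w o₂ := by
  obtain rfl | ⟨w₁, rfl, h₁⟩ := h'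
  · exact h
  obtain ⟨hw, hw₁ | hlt⟩ := h
  · exact absurd (mem_mpref_of_mPref h₁) hw₁
  cases o₂ with
  | none => exact hw
  | some w₂ =>
    obtain ⟨-, hw₂ | hlt₁⟩ := h₁
    · exact ⟨hw, .inl hw₂⟩
    · exact ⟨hw, .inr (hlt.trans hlt₁)⟩

theorem mPref_of_mWeak_some [DecidableEq W] {I : SMInstance M W} {m : M} {w : W}
    {o : Option W} (h : I.mWeak m (some w) o) (hne : o ≠ some w) : I.mPref m w o := by
  obtain h | ⟨_, hw, hp⟩ := h
  · exact absurd h.symm hne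
  · rwa [Option.some_inj.mp hw]

theorem wWeak_of_not_wPref [DecidableEq M] {I : SMInstance M W} {w : W} {m : M}
    {o : Option M} (hm : m ∈ I.wpref w) (ho : ∀ p ∈ o, p ∈ I.wpref w)
    (h : ¬ I.wPref w m o) : I.wWeak w o (some m) := by
  cases o with
  | none => exact absurd hm h
  | some p =>
    have hp : p ∈ I.wpref w := ho p rfl
    by_cases hpm : p = m
    · exact .inl (congrArg some hpm)
    have hidx : (I.wpref w).idxOf p ≠ (I.wpref w).idxOf m :=
      fun he => hpm ((List.idxOf_inj hp).mp he)
    refine .inr ⟨p, rfl, hp, .inr ?_⟩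
    by_contra hge
    exact h ⟨hm, .inr (by omega)⟩

theorem wPref_iff_of_prefix [DecidableEq M] {I J : SMInstance M W} {w : W} {m : M}
    {o : Option M} (h : J.wpref w <+: I.wpref w) (hm : m ∈ J.wpref w)
    (ho : ∀ p ∈ o, p ∈ J.wpref w) : J.wPref w m o ↔ I.wPref w m o := by
  cases o with
  | none => exact ⟨fun _ => h.subset hm, fun _ => hm⟩
  | some p =>
    have hp : p ∈ J.wpref w := ho p rfl
    simp only [wPref, h.idxOf_eq_of_mem hm, h.idxOf_eq_of_mem hp, hm, h.subset hm, hp,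
      h.subset hp, not_true_eq_false, false_or, true_and]

theorem wWeak_of_prefix [DecidableEq M] {I J : SMInstance M W} {w : W} {o₁ o₂ : Option M}
    (h : J.wpref w <+: I.wpref w) (hJ : J.wWeak w o₁ o₂) (ho : ∀ p ∈ o₂, p ∈ J.wpref w) :
    I.wWeak w o₁ o₂ := by
  obtain rfl | ⟨m, rfl, hm⟩ := hJ
  · exact .inl rfl
  · exact .inr ⟨m, rfl, (wPref_iff_of_prefix h (mem_wpref_of_wPref hm) ho).mp hm⟩

theorem not_wPref_of_not_mem_prefix [DecidableEq M] {J K : SMInstance M W} {w : W} {m p : M}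
    (h : J.wpref w <+: K.wpref w) (hm : m ∉ J.wpref w) (hp : p ∈ J.wpref w) :
    ¬ K.wPref w m (some p) := by
  rintro ⟨-, hpK | hlt⟩
  · exact hpK (h.subset hp)
  · have hpJ := (h.mem_iff_idxOf_lt_length p).mp hp
    have hmJ := (h.mem_iff_idxOf_lt_length m).not.mp hm
    omega

end SMInstance

open SMInstance

namespace Matching

variable {M W : Type*}

theorem μm_get_μw (μ : Matching M W) {w : W} (hw : (μ.μw w).isSome) :
    μ.μm ((μ.μw w).get hw) = some w :=
  (μ.consistent _ w).mpr (Option.some_get hw).symm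

theorem μw_get_μm (μ : Matching M W) {m : M} (hm : (μ.μm m).isSome) :
    μ.μw ((μ.μm m).get hm) = some m :=
  (μ.consistent m _).mp (Option.some_get hm).symm

theorem card_matched_women_eq_card_matched_men [Fintype M] [Fintype W] (μ : Matching M W) :
    #{w | (μ.μw w).isSome} = #{m | (μ.μm m).isSome} := by
  refine card_bij' (fun w hw => (μ.μw w).get (by simpa using hw))
    (fun m hm => (μ.μm m).get (by simpa using hm)) ?_ ?_ ?_ ?_
  all_goals intro _ _; simp [μm_get_μw, μw_get_μm]

end Matching

section Stability

variable {M W : Type*} [DecidableEq M] [DecidableEq W] {I J K : SMInstance M W}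
  {μ ν : Matching M W}

theorem IsStable.mem_wpref (h : IsStable I μ) {w : W} {m : M} (hw : μ.μw w = some m) :
    m ∈ I.wpref w :=
  (h.1 m w ((μ.consistent m w).mpr hw)).2

theorem IsMenOptimal.wWeak_of_isStable (h : IsMenOptimal I μ) (hν : IsStable I ν) (w : W) :
    I.wWeak w (ν.μw w) (μ.μw w) := by
  cases hμw : μ.μw w with
  | none =>
    cases hνw : ν.μw w with
    | none => exact .inl rfl
    | some m => exact .inr ⟨m, rfl, hν.mem_wpref hνw⟩
  | some m =>
    by_cases hνm : ν.μm m = some w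
    · exact .inl ((ν.consistent m w).mp hνm)
    have hmw : I.mPref m w (ν.μm m) := by
      have := h.2 ν hν m
      rw [(μ.consistent m w).mpr hμw] at this
      exact mPref_of_mWeak_some this hνm
    exact wWeak_of_not_wPref (h.1.mem_wpref hμw) (fun p hp => hν.mem_wpref hp)
      (fun hwm => hν.2 m w ⟨hνm, hmw, hwm⟩)

/-- Rural hospitals theorem. The women matched in `μ` are among those matched in `ν`, and the men
matched in `ν` among those matched in `μ`; counting forces equality. -/
theorem IsMenOptimal.isSome_of_isStable [Fintype M] [Fintype W] (h : IsMenOptimal I μ)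
    (hν : IsStable I ν) {w : W} (hw : (ν.μw w).isSome) : (μ.μw w).isSome := by
  have hW : ({w | (μ.μw w).isSome} : Finset W) ⊆ ({w | (ν.μw w).isSome} : Finset W) := by
    intro w
    simp only [Finset.mem_filter, mem_univ, true_and]
    intro hμw
    obtain he | ⟨m, he, -⟩ := h.wWeak_of_isStable hν w <;> simp [he, hμw]
  have hM : ({m | (ν.μm m).isSome} : Finset M) ⊆ ({m | (μ.μm m).isSome} : Finset M) := by
    intro m
    simp only [Finset.mem_filter, mem_univ, true_and]
    intro hνm
    obtain he | ⟨w, he, -⟩ := h.2 ν hν m <;> simp [he, hνm]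
  have heq := eq_of_subset_of_card_le hW <| by
    rw [μ.card_matched_women_eq_card_matched_men, ν.card_matched_women_eq_card_matched_men]
    exact card_le_card hM
  have hmem : w ∈ ({w | (ν.μw w).isSome} : Finset W) := by simpa using hw
  rw [← heq] at hmem
  simpa using hmem

theorem IsStable.of_prefix (hμ : IsStable I μ) (hm : J.mpref = I.mpref)
    (hw : ∀ w, J.wpref w <+: I.wpref w) (hkeep : ∀ w m, μ.μw w = some m → m ∈ J.wpref w) :
    IsStable J μ := by
  refine ⟨fun m w hmw => ⟨hm ▸ (hμ.1 m w hmw).1, hkeep w m ((μ.consistent m w).mp hmw)⟩, ?_⟩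
  rintro m w ⟨hne, hmw, hwm⟩
  exact hμ.2 m w ⟨hne, (mPref_congr hm).mp hmw,
    (wPref_iff_of_prefix (hw w) (mem_wpref_of_wPref hwm) (hkeep w)).mp hwm⟩

theorem IsMenOptimal.isStable_of_prefix [Fintype M] [Fintype W] (hμ : IsMenOptimal J μ)
    (hm : J.mpref = K.mpref) (hw : ∀ w, J.wpref w <+: K.wpref w) (hνJ : IsStable J ν)
    (hνK : IsStable K ν) : IsStable K μ := by
  refine ⟨fun m w hmw => ⟨hm ▸ (hμ.1.1 m w hmw).1, (hw w).subset (hμ.1.1 m w hmw).2⟩, ?_⟩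
  rintro m w ⟨hne, hmw, hwm⟩
  by_cases hmJ : m ∈ J.wpref w
  · exact hμ.1.2 m w ⟨hne, (mPref_congr hm).mpr hmw,
      (wPref_iff_of_prefix (hw w) hmJ (fun _ => hμ.1.mem_wpref)).mpr hwm⟩
  cases hμw : μ.μw w with
  | some p =>
    rw [hμw] at hwm
    exact not_wPref_of_not_mem_prefix (hw w) hmJ (hμ.1.mem_wpref hμw) hwm
  | none =>
    rw [hμw] at hwm
    have hνw : ν.μw w = none := by
      by_contra hνw
      simpa [hμw] using hμ.isSome_of_isStable hνJ (Option.ne_none_iff_isSome.mp hνw)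
    have hmν : K.mPref m w (ν.μm m) := (mPref_congr hm).mp <|
      mPref_of_mPref_of_mWeak ((mPref_congr hm).mpr hmw) (hμ.2 ν hνJ m)
    refine hνK.2 m w ⟨fun h => by simp [(ν.consistent m w).mp h] at hνw, hmν, ?_⟩
    rwa [hνw]

end Stability

section Truncation

variable {M W : Type*} {I J K : SMInstance M W} {L : Set W}

theorem TruncManip.wpref_prefix (h : TruncManip I J L) (w : W) : J.wpref w <+: I.wpref w := by
  by_cases hw : w ∈ L
  · exact h.2 w hw
  · rw [h.1.2 w hw]

theorem TruncManip.wpref_prefix_of_length_le (hJ : TruncManip I J L) (hK : TruncManip I K L)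
    (hlen : ∀ w ∈ L, (J.wpref w).length ≤ (K.wpref w).length) (w : W) :
    J.wpref w <+: K.wpref w := by
  by_cases hw : w ∈ L
  · exact List.prefix_of_prefix_length_le (hJ.2 w hw) (hK.2 w hw) (hlen w hw)
  · rw [hJ.1.2 w hw, hK.1.2 w hw]

theorem TruncManip.isStable [DecidableEq M] [DecidableEq W] {μ : Matching M W}
    (h : TruncManip I J L) (hμ : IsStable I μ)
    (hk : ∀ w ∈ L, ∀ m, μ.μw w = some m → m ∈ J.wpref w) : IsStable J μ := by
  refine hμ.of_prefix h.1.1 h.wpref_prefix fun w m hwm => ?_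
  by_cases hw : w ∈ L
  · exact hk w hw m hwm
  · rw [h.1.2 w hw]
    exact hμ.mem_wpref hwm

end Truncation

/-- shorter truncations (still keeping the women-optimal partner)
yield weakly better outcomes for every woman. -/
theorem shorter_is_better {M W : Type*} [DecidableEq M] [DecidableEq W]
    [Fintype M] [Fintype W] (I I₁ I₂ : SMInstance M W) (L : Set W)
    (μW μ₁ μ₂ : Matching M W) (hW : IsWomenOptimal I μW)
    (h1 : TruncManip I I₁ L) (h2 : TruncManip I I₂ L)
    (hk1 : ∀ w ∈ L, ∀ m, μW.μw w = some m → m ∈ I₁.wpref w)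
    (hk2 : ∀ w ∈ L, ∀ m, μW.μw w = some m → m ∈ I₂.wpref w)
    (hlen : ∀ w ∈ L, (I₁.wpref w).length ≤ (I₂.wpref w).length)
    (ho1 : IsMenOptimal I₁ μ₁) (ho2 : IsMenOptimal I₂ μ₂) :
    ∀ w, I.wWeak w (μ₁.μw w) (μ₂.μw w) := by
  have hst12 : IsStable I₂ μ₁ :=
    ho1.isStable_of_prefix (h1.1.1.trans h2.1.1.symm) (h1.wpref_prefix_of_length_le h2 hlen)
      (h1.isStable hW.1 hk1) (h2.isStable hW.1 hk2)
  intro w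
  exact wWeak_of_prefix (h2.wpref_prefix w) (ho2.wWeak_of_isStable hst12 w)
    (fun _ => ho2.1.mem_wpref)
end

section
/- During the elimination of an exposed rotation R = ((m₁,...,m_r),(w₁,...,w_r)) in the men-proposing deferred acceptance process, for each man m_i, the woman w_{i+1} (indices mod r) is the first woman to accept his new proposal, and each woman in R accepts exactly one new proposal during the elimination. -/
open List

/-!
The reduced table alone decides every proposal made while `R` is eliminated. Since `w_{i+1}`
is on `m_i`'s reduced list, `m_i` is on hers, ranked above her last entry `m_{i+1}`: she accepts
him. A woman strictly between `w_i` and `w_{i+1}` on `m_i`'s true list is missing from his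
reduced list, so he was removed from hers, which happens only to men ranked below her current
partner: she rejects him. Finally, the women `w_i` are distinct (each is engaged to a different
man), so if `m_j` were accepted by `w_{i+1} ≠ w_{j+1}`, she would lie strictly between `w_j`
and `w_{j+1}` on his list and would have rejected him.
-/

theorem List.Sublist.idxOf_lt_idxOf {α : Type*} [DecidableEq α] {l L : List α} (hs : l <+ L)
    (hL : L.Nodup) {a b : α} (ha : a ∈ l) (hb : b ∈ l) (hab : l.idxOf a < l.idxOf b) :
    L.idxOf a < L.idxOf b := by
  induction hs with
  | slnil => simp at ha
  | cons x _ ih =>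
    have hx := (List.nodup_cons.mp hL).1
    grind
  | cons_cons x _ ih =>
    have hL' := List.nodup_cons.mp hL
    grind

theorem List.Sublist.idxOf_lt_idxOf_of_getLast? {α : Type*} [DecidableEq α] {l L : List α}
    (hs : l <+ L) (hL : L.Nodup) {a b : α} (ha : a ∈ l) (hb : l.getLast? = some b) (hab : a ≠ b) :
    L.idxOf a < L.idxOf b := by
  have hl := hL.sublist hs
  obtain ⟨hlen, rfl⟩ := List.getElem?_eq_some_iff.mp (List.getLast?_eq_getElem? ▸ hb)
  refine hs.idxOf_lt_idxOf hL ha (List.getElem_mem _) ?_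
  have := List.idxOf_lt_length_iff.mpr ha
  have := (List.idxOf_inj ha).not.mpr hab
  rw [hl.idxOf_getElem] at this ⊢
  omega

theorem List.Sublist.idxOf_lt_idxOf_of_getElem?_one {α : Type*} [DecidableEq α] {l L : List α}
    (hs : l <+ L) (hL : L.Nodup) {a b c : α} (ha : l.head? = some a) (hb : l[1]? = some b)
    (hc : c ∈ l) (hca : c ≠ a) (hcb : c ≠ b) : L.idxOf b < L.idxOf c := by
  have hl := hL.sublist hs
  obtain ⟨hlen, rfl⟩ := List.getElem?_eq_some_iff.mp hb
  obtain ⟨_, rfl⟩ := List.getElem?_eq_some_iff.mp (List.head?_eq_getElem? ▸ ha)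
  refine hs.idxOf_lt_idxOf hL (List.getElem_mem _) hc ?_
  have h0 := (List.idxOf_inj hc).not.mpr hca
  have h1 := (List.idxOf_inj hc).not.mpr hcb
  rw [hl.idxOf_getElem] at h0 h1 ⊢
  omega

namespace Rot

variable {M W : Type*} (R : Rot M W)

theorem nxt_eq_add_one (i : Fin R.r) : R.nxt i = i + ⟨1, by have := R.hr; omega⟩ := by
  ext
  simp only [Rot.nxt, Fin.val_add]

theorem nxt_injective : Function.Injective R.nxt := by
  intro i j h
  simpa only [nxt_eq_add_one, add_left_inj] using h

theorem nxt_ne_self (i : Fin R.r) : R.nxt i ≠ i := by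
  have := R.hr
  rw [Ne, Fin.ext_iff]
  change ((i : ℕ) + 1) % R.r ≠ i
  obtain h | h := (Nat.succ_le_of_lt i.isLt).lt_or_eq
  · rw [Nat.mod_eq_of_lt h]; omega
  · rw [Nat.succ_eq_add_one] at h
    rw [h, Nat.mod_self]; omega

end Rot

section Exposes

variable {M W : Type*} [DecidableEq M] {I : SMInstance M W}

def ReducedTable.Exposes (T : ReducedTable I) (R : Rot M W) : Prop :=
  ∀ i, (T.rm (R.ms i)).head? = some (R.ws i) ∧ (T.rm (R.ms i))[1]? = some (R.ws (R.nxt i))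

namespace ReducedTable.Exposes

variable {T : ReducedTable I} {R : Rot M W}

theorem getLast?_rw (hexp : T.Exposes R) (i : Fin R.r) :
    (T.rw (R.ws i)).getLast? = some (R.ms i) :=
  (T.engaged _ _).mp (hexp i).1

theorem ws_injective (hexp : T.Exposes R) : Function.Injective R.ws := fun i j h =>
  R.inj (Option.some_injective _ ((hexp.getLast?_rw i).symm.trans (h ▸ hexp.getLast?_rw j)))

theorem mem_rw_nxt (hexp : T.Exposes R) (i : Fin R.r) : R.ms i ∈ T.rw (R.ws (R.nxt i)) := by
  obtain ⟨hlt, hget⟩ := List.getElem?_eq_some_iff.mp (hexp i).2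
  exact (T.mem_iff _ _).mp (hget ▸ List.getElem_mem hlt)

theorem notMem_rw_of_between [DecidableEq W] (hexp : T.Exposes R) (i : Fin R.r) {w : W}
    (hlo : (I.mpref (R.ms i)).idxOf (R.ws i) < (I.mpref (R.ms i)).idxOf w)
    (hhi : (I.mpref (R.ms i)).idxOf w < (I.mpref (R.ms i)).idxOf (R.ws (R.nxt i))) :
    R.ms i ∉ T.rw w := fun hw =>
  have := (T.rmSub _).idxOf_lt_idxOf_of_getElem?_one (I.mnodup _) (hexp i).1 (hexp i).2
    ((T.mem_iff _ _).mpr hw) (by rintro rfl; omega) (by rintro rfl; omega)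
  by omega

theorem idxOf_ms_lt_idxOf_ms_nxt (hexp : T.Exposes R) (i : Fin R.r) :
    R.ms i ∈ I.wpref (R.ws (R.nxt i)) ∧
      (I.wpref (R.ws (R.nxt i))).idxOf (R.ms i) <
        (I.wpref (R.ws (R.nxt i))).idxOf (R.ms (R.nxt i)) :=
  ⟨(T.rwSub _).subset (hexp.mem_rw_nxt i),
    (T.rwSub _).idxOf_lt_idxOf_of_getLast? (I.wnodup _) (hexp.mem_rw_nxt i)
      (hexp.getLast?_rw _) fun h => R.nxt_ne_self i (R.inj h).symm⟩

theorem idxOf_getLast?_lt_of_between [DecidableEq W] (hexp : T.Exposes R) (i : Fin R.r) {w : W}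
    (hlo : (I.mpref (R.ms i)).idxOf (R.ws i) < (I.mpref (R.ms i)).idxOf w)
    (hhi : (I.mpref (R.ms i)).idxOf w < (I.mpref (R.ms i)).idxOf (R.ws (R.nxt i)))
    (hw : R.ms i ∈ I.wpref w) {p : M} (hp : (T.rw w).getLast? = some p) :
    (I.wpref w).idxOf p < (I.wpref w).idxOf (R.ms i) :=
  T.removed_worse _ _ _ hw (hexp.notMem_rw_of_between i hlo hhi) hp

theorem eq_of_idxOf_lt_idxOf_ms_nxt [DecidableEq W] (hexp : T.Exposes R) {i j : Fin R.r}
    (hlo : (I.mpref (R.ms j)).idxOf (R.ws j) < (I.mpref (R.ms j)).idxOf (R.ws (R.nxt i)))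
    (hhi : (I.mpref (R.ms j)).idxOf (R.ws (R.nxt i)) ≤
      (I.mpref (R.ms j)).idxOf (R.ws (R.nxt j)))
    (hmem : R.ws (R.nxt i) ∈ I.mpref (R.ms j)) (hw : R.ms j ∈ I.wpref (R.ws (R.nxt i)))
    (hpref : (I.wpref (R.ws (R.nxt i))).idxOf (R.ms j) <
      (I.wpref (R.ws (R.nxt i))).idxOf (R.ms (R.nxt i))) :
    j = i := by
  by_cases hij : R.ws (R.nxt i) = R.ws (R.nxt j)
  · exact R.nxt_injective (hexp.ws_injective hij) |>.symm
  · have hhi' := lt_of_le_of_ne hhi ((List.idxOf_inj hmem).not.mpr hij)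
    have := hexp.idxOf_getLast?_lt_of_between j hlo hhi' hw (hexp.getLast?_rw _)
    omega

end ReducedTable.Exposes

end Exposes

theorem rotation_first_acceptance_general {M W : Type*} [DecidableEq M] [DecidableEq W]
    (I : SMInstance M W) (T : ReducedTable I) (R : Rot M W)
    (hexp : ∀ i, (T.rm (R.ms i)).head? = some (R.ws i) ∧
                 (T.rm (R.ms i))[1]? = some (R.ws (R.nxt i))) :
    -- (a) `w_{i+1}` accepts `m_i`: she prefers him to her current partner `m_{i+1}`
    (∀ i, R.ms i ∈ I.wpref (R.ws (R.nxt i)) ∧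
      (I.wpref (R.ws (R.nxt i))).idxOf (R.ms i) <
        (I.wpref (R.ws (R.nxt i))).idxOf (R.ms (R.nxt i))) ∧
    -- (b) every woman strictly between `w_i` and `w_{i+1}` on `m_i`'s true list
    -- rejects him: she prefers her current partner
    (∀ i, ∀ w', w' ∈ I.mpref (R.ms i) →
      (I.mpref (R.ms i)).idxOf (R.ws i) < (I.mpref (R.ms i)).idxOf w' →
      (I.mpref (R.ms i)).idxOf w' < (I.mpref (R.ms i)).idxOf (R.ws (R.nxt i)) →
      R.ms i ∈ I.wpref w' →
      ∀ p, (T.rw w').getLast? = some p →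
        (I.wpref w').idxOf p < (I.wpref w').idxOf (R.ms i)) ∧
    -- (c) each woman `w_{i+1}` of the rotation accepts only the proposal of `m_i`
    (∀ i j,
      (I.mpref (R.ms j)).idxOf (R.ws j) < (I.mpref (R.ms j)).idxOf (R.ws (R.nxt i)) →
      (I.mpref (R.ms j)).idxOf (R.ws (R.nxt i)) ≤
        (I.mpref (R.ms j)).idxOf (R.ws (R.nxt j)) →
      R.ws (R.nxt i) ∈ I.mpref (R.ms j) → R.ms j ∈ I.wpref (R.ws (R.nxt i)) →
      (I.wpref (R.ws (R.nxt i))).idxOf (R.ms j) <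
        (I.wpref (R.ws (R.nxt i))).idxOf (R.ms (R.nxt i)) →
      j = i) := by
  have hexp : T.Exposes R := hexp
  exact ⟨hexp.idxOf_ms_lt_idxOf_ms_nxt,
    fun i _ _ hlo hhi hw _ hp => hexp.idxOf_getLast?_lt_of_between i hlo hhi hw hp,
    fun _ _ hlo hhi hmem hw hpref => hexp.eq_of_idxOf_lt_idxOf_ms_nxt hlo hhi hmem hw hpref⟩

/-- during the elimination of an exposed rotation, `w_{i+1}` is the
first woman to accept `m_i`'s new proposals (every woman strictly between `w_i`
and `w_{i+1}` on his list rejects him, and `w_{i+1}` accepts him), and each woman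
of the rotation accepts exactly one new proposal. -/
theorem rotation_first_acceptance {M W : Type*} [DecidableEq M] [DecidableEq W]
    [Fintype M] [Fintype W] (I : SMInstance M W) (T : ReducedTable I) (R : Rot M W)
    (hexp : ∀ i, (T.rm (R.ms i)).head? = some (R.ws i) ∧
                 (T.rm (R.ms i))[1]? = some (R.ws (R.nxt i))) :
    -- (a) `w_{i+1}` accepts `m_i`: she prefers him to her current partner `m_{i+1}`
    (∀ i, R.ms i ∈ I.wpref (R.ws (R.nxt i)) ∧
      (I.wpref (R.ws (R.nxt i))).idxOf (R.ms i) <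
        (I.wpref (R.ws (R.nxt i))).idxOf (R.ms (R.nxt i))) ∧
    -- (b) every woman strictly between `w_i` and `w_{i+1}` on `m_i`'s true list
    -- rejects him: she prefers her current partner
    (∀ i, ∀ w', w' ∈ I.mpref (R.ms i) →
      (I.mpref (R.ms i)).idxOf (R.ws i) < (I.mpref (R.ms i)).idxOf w' →
      (I.mpref (R.ms i)).idxOf w' < (I.mpref (R.ms i)).idxOf (R.ws (R.nxt i)) →
      R.ms i ∈ I.wpref w' →
      ∀ p, (T.rw w').getLast? = some p →
        (I.wpref w').idxOf p < (I.wpref w').idxOf (R.ms i)) ∧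
    -- (c) each woman `w_{i+1}` of the rotation accepts only the proposal of `m_i`
    (∀ i j,
      (I.mpref (R.ms j)).idxOf (R.ws j) < (I.mpref (R.ms j)).idxOf (R.ws (R.nxt i)) →
      (I.mpref (R.ms j)).idxOf (R.ws (R.nxt i)) ≤
        (I.mpref (R.ms j)).idxOf (R.ws (R.nxt j)) →
      R.ws (R.nxt i) ∈ I.mpref (R.ms j) → R.ms j ∈ I.wpref (R.ws (R.nxt i)) →
      (I.wpref (R.ws (R.nxt i))).idxOf (R.ms j) <
        (I.wpref (R.ws (R.nxt i))).idxOf (R.ms (R.nxt i)) →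
      j = i) :=
  rotation_first_acceptance_general I T R hexp
end

section
/- After eliminating a single rotation R and updating the suitor graph accordingly, all agents (men and women) appearing in R lie in the same strongly connected component of the suitor graph. -/
open List

/-!
After eliminating `R`, the man `m_i` is matched to `w_{i+1}` but still prefers `w_i`, and he is
her favourite suitor. Men outside her reduced list rank below her partner `m_i`. A man on her
reduced list has `w_i` on his own reduced list, so he cannot prefer her to its head (his partner,
if he is not in `R`) nor to its second entry (if he is some `m_j`, unless `w_i = w_j`, i.e.
he is `m_i`). So the suitor graph contains the edges `m_i → w_i → m_{i-1}`, a cycle through all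
agents of `R`.
-/

theorem List.idxOf_lt_idxOf_of_pair_sublist {α : Type*} [DecidableEq α] {a b : α} :
    ∀ {l : List α}, [a, b] <+ l → l.Nodup → l.idxOf a < l.idxOf b
  | [], h, _ => absurd (List.sublist_nil.1 h) (by simp)
  | c :: t, h, hn => by
    obtain ⟨hc, ht⟩ := List.nodup_cons.1 hn
    cases h with
    | cons _ h' =>
      have hca : c ≠ a := (ne_of_mem_of_not_mem (h'.subset (by simp)) hc).symm
      have hcb : c ≠ b := (ne_of_mem_of_not_mem (h'.subset (by simp)) hc).symm
      rw [List.idxOf_cons_ne t hca, List.idxOf_cons_ne t hcb]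
      exact Nat.succ_lt_succ (List.idxOf_lt_idxOf_of_pair_sublist h' ht)
    | cons_cons _ h' =>
      have hb : b ∈ t := h'.subset (List.mem_singleton_self b)
      rw [List.idxOf_cons_self, List.idxOf_cons_ne t (ne_of_mem_of_not_mem hb hc).symm]
      exact Nat.succ_pos _

theorem List.pair_sublist_of_mem {α : Type*} {a b : α} {l m : List α}
    (hb : b ∈ l) (h : a :: l <+ m) : [a, b] <+ m :=
  ((List.singleton_sublist.2 hb).cons_cons a).trans h

theorem List.exists_eq_cons_cons {α : Type*} {l : List α} {a b : α}
    (ha : l.head? = some a) (hb : l[1]? = some b) : ∃ t, l = a :: b :: t := by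
  obtain ⟨_ | ⟨c, t⟩, rfl⟩ := List.head?_eq_some_iff.1 ha
  · simp at hb
  · obtain rfl : c = b := by simpa using hb
    exact ⟨t, rfl⟩

open Fin.NatCast in
theorem Fin.reflTransGen_of_forall_add_one {α : Type*} {r : α → α → Prop} {n : ℕ} [NeZero n]
    {f : Fin n → α} (h : ∀ i, Relation.ReflTransGen r (f (i + 1)) (f i)) (i j : Fin n) :
    Relation.ReflTransGen r (f i) (f j) := by
  have reach : ∀ k : ℕ, Relation.ReflTransGen r (f (j + (k : Fin n))) (f j) := by
    intro k
    induction k with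
    | zero => simpa using Relation.ReflTransGen.refl
    | succ k ih =>
      rw [Nat.cast_succ, ← add_assoc]
      exact (h _).trans ih
  simpa using reach (i - j).val

section StableMarriage

variable {M W : Type*}

instance Rot.neZero (R : Rot M W) : NeZero R.r := ⟨by have := R.hr; omega⟩

theorem Rot.nxt_eq_add_one_s10 (R : Rot M W) (i : Fin R.r) : R.nxt i = i + 1 := by
  have := R.hr
  ext
  simp [Rot.nxt, Fin.val_add, Nat.mod_eq_of_lt (show 1 < R.r by omega)]

namespace SMInstance

variable [DecidableEq W] {I : SMInstance M W} {m : M} {w b : W}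

theorem not_mPref_some_self : ¬ I.mPref m w (some w) :=
  fun ⟨hw, h⟩ => h.elim (· hw) (lt_irrefl _)

theorem mPref_some_of_pair_sublist (h : [w, b] <+ I.mpref m) : I.mPref m w (some b) :=
  ⟨h.subset (by simp), Or.inr (List.idxOf_lt_idxOf_of_pair_sublist h (I.mnodup m))⟩

theorem not_mPref_some_of_pair_sublist (h : [b, w] <+ I.mpref m) : ¬ I.mPref m w (some b) :=
  fun ⟨_, hlt⟩ => hlt.elim (· (h.subset (by simp)))
    (lt_asymm (List.idxOf_lt_idxOf_of_pair_sublist h (I.mnodup m)))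

end SMInstance

variable [DecidableEq M]

theorem ReducedTable.idxOf_lt_of_not_mem_rw {I : SMInstance M W} (T : ReducedTable I)
    {m p : M} {w : W}
    (hp : (T.rw w).getLast? = some p) (hm : m ∉ T.rw w) :
    (I.wpref w).idxOf p < (I.wpref w).idxOf m := by
  by_cases hmw : m ∈ I.wpref w
  · exact T.removed_worse m w p hmw hm hp
  · rw [List.idxOf_eq_length_iff.2 hmw]
    exact List.idxOf_lt_length_iff.2 ((T.rwSub w).subset (List.mem_of_getLast? hp))

variable [DecidableEq W]

namespace ReducedTable

variable {I : SMInstance M W} (T : ReducedTable I) {m : M} {w a b : W}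

theorem not_mPref_head?_of_mem (hw : w ∈ T.rm m) : ¬ I.mPref m w (T.rm m).head? := by
  obtain ⟨h, t, hrm⟩ := List.exists_cons_of_ne_nil (List.ne_nil_of_mem hw)
  rw [hrm] at hw ⊢
  rcases List.mem_cons.1 hw with rfl | hwt
  · exact SMInstance.not_mPref_some_self
  · exact SMInstance.not_mPref_some_of_pair_sublist
      (List.pair_sublist_of_mem hwt (hrm ▸ T.rmSub m))

theorem eq_head_of_mem_of_mPref_second {t : List W} (hrm : T.rm m = a :: b :: t)
    (hw : w ∈ T.rm m) (hpref : I.mPref m w (some b)) : w = a := by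
  have hsub := hrm ▸ T.rmSub m
  rw [hrm] at hw
  rcases List.mem_cons.1 hw with rfl | hw
  · rfl
  rcases List.mem_cons.1 hw with rfl | hwt
  · exact absurd hpref SMInstance.not_mPref_some_self
  · exact absurd hpref (SMInstance.not_mPref_some_of_pair_sublist
      (List.pair_sublist_of_mem hwt (List.sublist_of_cons_sublist hsub)))

end ReducedTable

theorem suitorEdge_of_favourite {I : SMInstance M W} {L : Set W} {μ : Matching M W}
    {m : M} {w : W} (hm : m ∈ suitorSet I μ w)
    (hfav : ∀ m' ∈ suitorSet I μ w, m' ≠ m → (I.wpref w).idxOf m < (I.wpref w).idxOf m') :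
    SuitorEdge I L μ (Sum.inl m) (Sum.inr (Sum.inl w)) := by
  by_cases hw : w ∈ L
  · exact .suitor_manip w m hw hm
  · exact .suitor_honest w m hw hm hfav

variable {I : SMInstance M W} (T : ReducedTable I) {R : Rot M W} {μ μ' : Matching M W}

theorem eq_ms_of_mem_suitorSet_of_mem_rw (hμ : ∀ m, μ.μm m = (T.rm m).head?)
    (hrm : ∀ i, ∃ t, T.rm (R.ms i) = R.ws i :: R.ws (R.nxt i) :: t) (helim : ElimStep R μ μ')
    {i : Fin R.r} {m : M} (hm : m ∈ suitorSet I μ' (R.ws i)) (hmT : m ∈ T.rw (R.ws i)) :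
    m = R.ms i := by
  have hwm : R.ws i ∈ T.rm m := (T.mem_iff _ _).2 hmT
  by_cases hrot : ∃ j, m = R.ms j
  · obtain ⟨j, rfl⟩ := hrot
    obtain ⟨t, ht⟩ := hrm j
    have hpref : I.mPref (R.ms j) (R.ws i) (some (R.ws (R.nxt j))) := helim.1 j ▸ hm
    have hij : R.ws i = R.ws j := T.eq_head_of_mem_of_mPref_second ht hwm hpref
    have hlast : ∀ k, (T.rw (R.ws k)).getLast? = some (R.ms k) := fun k =>
      (T.engaged _ _).1 (by obtain ⟨t, ht⟩ := hrm k; simp [ht])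
    exact Option.some.inj ((hij ▸ hlast j).symm.trans (hlast i))
  · push Not at hrot
    have hhead := T.not_mPref_head?_of_mem hwm
    rw [← hμ, ← helim.2 m hrot] at hhead
    exact absurd hm hhead

theorem suitorEdge_ms_ws_of_elimStep (L : Set W) (hμ : ∀ m, μ.μm m = (T.rm m).head?)
    (hrm : ∀ i, ∃ t, T.rm (R.ms i) = R.ws i :: R.ws (R.nxt i) :: t) (helim : ElimStep R μ μ')
    (i : Fin R.r) : SuitorEdge I L μ' (Sum.inl (R.ms i)) (Sum.inr (Sum.inl (R.ws i))) := by
  obtain ⟨t, ht⟩ := hrm i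
  have hlast : (T.rw (R.ws i)).getLast? = some (R.ms i) := (T.engaged _ _).1 (by simp [ht])
  refine suitorEdge_of_favourite ?_ fun m hm hne => T.idxOf_lt_of_not_mem_rw hlast fun hmT =>
    hne (eq_ms_of_mem_suitorSet_of_mem_rw T hμ hrm helim hm hmT)
  show I.mPref (R.ms i) (R.ws i) (μ'.μm (R.ms i))
  rw [helim.1 i]
  exact SMInstance.mPref_some_of_pair_sublist
    (List.pair_sublist_of_mem List.mem_cons_self (ht ▸ T.rmSub (R.ms i)))

end StableMarriage

theorem rotation_same_scc_general {M W : Type*} [DecidableEq M] [DecidableEq W]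
    (I : SMInstance M W) (L : Set W) (T : ReducedTable I)
    (R : Rot M W) (μ μ' : Matching M W)
    (hμ : ∀ m, μ.μm m = (T.rm m).head?)
    (hexp : ∀ i, (T.rm (R.ms i)).head? = some (R.ws i) ∧
                 (T.rm (R.ms i))[1]? = some (R.ws (R.nxt i)))
    (helim : ElimStep R μ μ') :
    ∀ i j,
      SReach I L μ' (Sum.inl (R.ms i)) (Sum.inl (R.ms j)) ∧
      SReach I L μ' (Sum.inl (R.ms i)) (Sum.inr (Sum.inl (R.ws j))) ∧
      SReach I L μ' (Sum.inr (Sum.inl (R.ws i))) (Sum.inl (R.ms j)) ∧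
      SReach I L μ' (Sum.inr (Sum.inl (R.ws i))) (Sum.inr (Sum.inl (R.ws j))) := by
  have hrm i := List.exists_eq_cons_cons (hexp i).1 (hexp i).2
  have suitorEdge := suitorEdge_ms_ws_of_elimStep T L hμ hrm helim
  have partnerEdge (k : Fin R.r) :
      SuitorEdge I L μ' (Sum.inr (Sum.inl (R.ws (k + 1)))) (Sum.inl (R.ms k)) :=
    .partner_wm _ _ ((μ'.consistent _ _).1 (R.nxt_eq_add_one_s10 k ▸ helim.1 k))
  have menReach : ∀ k l, SReach I L μ' (Sum.inl (R.ms k)) (Sum.inl (R.ms l)) :=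
    Fin.reflTransGen_of_forall_add_one (f := fun k => Sum.inl (R.ms k))
      fun k => .tail (.single (suitorEdge (k + 1))) (partnerEdge k)
  have womenReach (k l : Fin R.r) :
      SReach I L μ' (Sum.inr (Sum.inl (R.ws k))) (Sum.inl (R.ms l)) := by
    simpa using Relation.ReflTransGen.head (partnerEdge (k - 1)) (menReach (k - 1) l)
  intro i j
  exact ⟨menReach i j, (menReach i j).tail (suitorEdge j),
    womenReach i j, (womenReach i j).tail (suitorEdge j)⟩

/-- after eliminating a single rotation and updating the suitor
graph, all agents of the rotation lie in the same strongly connected component. -/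
theorem rotation_same_scc {M W : Type*} [DecidableEq M] [DecidableEq W]
    [Fintype M] [Fintype W] (I : SMInstance M W) (L : Set W) (T : ReducedTable I)
    (R : Rot M W) (μ μ' : Matching M W)
    (hμ : ∀ m, μ.μm m = (T.rm m).head?)
    (hstable : IsStable I μ)
    (hexp : ∀ i, (T.rm (R.ms i)).head? = some (R.ws i) ∧
                 (T.rm (R.ms i))[1]? = some (R.ws (R.nxt i)))
    (helim : ElimStep R μ μ') :
    ∀ i j,
      SReach I L μ' (Sum.inl (R.ms i)) (Sum.inl (R.ms j)) ∧
      SReach I L μ' (Sum.inl (R.ms i)) (Sum.inr (Sum.inl (R.ws j))) ∧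
      SReach I L μ' (Sum.inr (Sum.inl (R.ws i))) (Sum.inl (R.ms j)) ∧
      SReach I L μ' (Sum.inr (Sum.inl (R.ws i))) (Sum.inr (Sum.inl (R.ws j))) :=
  rotation_same_scc_general I L T R μ μ' hμ hexp helim
end

section
/- Let μ be a matching induced by a feasible manipulation with reported profile P. If each manipulator w modifies her reported list by moving the top two entries of her received-proposal list (ordered as in her reported list) to the top, ordering all other men arbitrarily below, then the induced matching of the modified profile is still μ. -/
/-!
The first proposer `μ(w)` heads each reordered list, so `μ` stays stable for the new profile.
If a stable matching of the new profile were better for some man, giving every man the better of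
his two partners yields a stable `σ ≥ μ` (for the men) with `σ ≠ μ`. Descending from `σ` towards
`μ` by eliminating exposed rotations, we may assume that every man who moves from `σ` to `μ` moves
to his next choice, the second entry of his list in the reduced table of `σ`. As `μ` is men-optimal
for the old profile, `σ` is blocked there by some pair `(a, u)`, necessarily with `u` a manipulator
and `a` between `μ(u)` and `σ(u)` in her old list. Then `σ(u)` and `a` are proposers of `u`, so the
second proposer `s` of `u` is placed right behind `μ(u)` in her new list, ahead of `σ(u)`; by
stability `s` prefers `σ(s)` to `u`. But `s` proposed to `u`, so he prefers `u` to `μ(s)`, while `u`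
accepts him: `μ(s)` is not his next choice.
-/

open List

namespace List
variable {α : Type*} [DecidableEq α]

theorem idxOf_le_of_filter_eq_cons {l : List α} {f : α → Bool} {x : α} {t : List α}
    (h : l.filter f = x :: t) {y : α} (hy : y ∈ l) (hfy : f y) : l.idxOf x ≤ l.idxOf y := by
  induction l generalizing t with
  | nil => simp at h
  | cons a l ih =>
    by_cases hfa : f a
    · simp_all [idxOf_cons]
    · simp only [filter_cons, hfa] at h
      have hxa : x ≠ a := by
        rintro rfl
        exact hfa (mem_filter.mp (h ▸ mem_cons_self)).2
      have hya : y ≠ a := by rintro rfl; exact hfa hfy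
      simpa [idxOf_cons_ne _ (Ne.symm hxa), idxOf_cons_ne _ (Ne.symm hya)] using
        ih h (by simpa [hya] using hy)

theorem filter_eq_cons_of_forall_idxOf_lt {l : List α} {f : α → Bool} {x : α} (hx : x ∈ l)
    (hfx : f x) (h : ∀ y ∈ l, f y → y ≠ x → l.idxOf x < l.idxOf y) : ∃ t, l.filter f = x :: t := by
  induction l with
  | nil => simp at hx
  | cons a l ih =>
    by_cases hax : a = x
    · subst hax; exact ⟨_, filter_cons_of_pos hfx⟩
    · have hfa : ¬ f a := fun hfa => by simpa [hax] using h a mem_cons_self hfa hax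
      simp only [filter_cons, hfa]
      refine ih (by simpa [Ne.symm hax] using hx) fun y hy hfy hyx => ?_
      have hya : y ≠ a := by rintro rfl; exact hfa hfy
      simpa [idxOf_cons_ne _ hax, idxOf_cons_ne _ (Ne.symm hya)] using
        h y (mem_cons_of_mem _ hy) hfy hyx

theorem idxOf_le_of_filter_eq_cons_cons {l : List α} {f : α → Bool} {x s : α} {t : List α}
    (h : l.filter f = x :: s :: t) {y : α} (hy : y ∈ l) (hfy : f y) (hyx : y ≠ x) :
    l.idxOf s ≤ l.idxOf y := by
  induction l with
  | nil => simp at h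
  | cons a l ih =>
    by_cases hfa : f a
    · simp only [filter_cons, hfa, if_true, cons.injEq] at h
      obtain ⟨rfl, h⟩ := h
      have := idxOf_le_of_filter_eq_cons h (by simpa [hyx] using hy) hfy
      by_cases hsa : s = a
      · simp [hsa]
      · simpa [idxOf_cons_ne _ (Ne.symm hsa), idxOf_cons_ne _ (Ne.symm hyx)]
    · simp only [filter_cons, hfa] at h
      have hsa : s ≠ a := by
        rintro rfl
        exact hfa (mem_filter.mp (h ▸ mem_cons_of_mem _ mem_cons_self)).2
      have hya : y ≠ a := by rintro rfl; exact hfa hfy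
      simpa [idxOf_cons_ne _ (Ne.symm hsa), idxOf_cons_ne _ (Ne.symm hya)] using
        ih h (by simpa [hya] using hy)

theorem exists_minimal_idxOf (l : List α) (p : α → Prop)
    (h : ∃ a ∈ l, p a) : ∃ a ∈ l, p a ∧ ∀ b ∈ l, p b → l.idxOf a ≤ l.idxOf b := by
  classical
  obtain ⟨a, ha, hmin⟩ := (l.toFinset.filter p).exists_min_image l.idxOf
    (by obtain ⟨a, hal, hpa⟩ := h; exact ⟨a, by simp [hal, hpa]⟩)
  simp only [Finset.mem_filter, mem_toFinset] at ha hmin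
  exact ⟨a, ha.1, ha.2, fun b hb hpb => hmin b ⟨hb, hpb⟩⟩

end List

namespace Function
variable {α : Type*} {f : α → α} {s : Set α}

theorem inter_periodicPts_nonempty [Finite α] (hs : Set.MapsTo f s s) {x : α} (hx : x ∈ s) :
    (s ∩ periodicPts f).Nonempty := by
  obtain ⟨m, n, heq, hmn⟩ : ∃ m n, f^[m] x = f^[n] x ∧ m ≠ n := by
    simpa [Injective] using not_injective_infinite_finite (f^[·] x)
  wlog hlt : m < n generalizing m n
  · exact this n m heq.symm hmn.symm (by omega)
  refine ⟨f^[m] x, hs.iterate m hx, mk_mem_periodicPts (n := n - m) (by omega) ?_⟩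
  rw [IsPeriodicPt, IsFixedPt, ← iterate_add_apply, Nat.sub_add_cancel hlt.le, heq]

theorem bijOn_inter_periodicPts (hs : Set.MapsTo f s s) :
    Set.BijOn f (s ∩ periodicPts f) (s ∩ periodicPts f) := by
  refine ⟨fun x hx => ⟨hs hx.1, (bijOn_periodicPts f).mapsTo hx.2⟩,
    (bijOn_periodicPts f).injOn.mono Set.inter_subset_right, fun y hy => ?_⟩
  obtain ⟨n, hn, hy'⟩ := mem_periodicPts.mp hy.2
  refine ⟨f^[n - 1] y, ⟨hs.iterate _ hy.1, mk_mem_periodicPts hn (hy'.apply_iterate _)⟩, ?_⟩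
  rw [← iterate_succ_apply' f (n - 1), Nat.succ_eq_add_one, Nat.sub_add_cancel hn]
  exact hy'

end Function

namespace Matching
variable {M W : Type*}

theorem eq_of_μm_eq_some (μ : Matching M W) {m₁ m₂ : M} {w : W} (h₁ : μ.μm m₁ = some w)
    (h₂ : μ.μm m₂ = some w) : m₁ = m₂ :=
  Option.some.inj (((μ.consistent _ _).mp h₁).symm.trans ((μ.consistent _ _).mp h₂))

theorem eq_of_μw_eq_some (μ : Matching M W) {w₁ w₂ : W} {m : M} (h₁ : μ.μw w₁ = some m)
    (h₂ : μ.μw w₂ = some m) : w₁ = w₂ :=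
  Option.some.inj (((μ.consistent _ _).mpr h₁).symm.trans ((μ.consistent _ _).mpr h₂))

open Classical in
noncomputable def ofMen (f : M → Option W)
    (hf : ∀ m₁ m₂ w, f m₁ = some w → f m₂ = some w → m₁ = m₂) : Matching M W where
  μm := f
  μw w := if h : ∃ m, f m = some w then some h.choose else none
  consistent m w := by
    constructor
    · intro h
      have hex : ∃ m, f m = some w := ⟨m, h⟩
      rw [dif_pos hex, hf _ _ _ hex.choose_spec h]
    · intro h
      split_ifs at h with hex
      exact Option.some.inj h ▸ hex.choose_spec

theorem exists_reassign (σ : Matching M W) {P : Set M} {s : M → W} {g : M → M}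
    (hg : ∀ x ∈ P, σ.μw (s x) = some (g x)) (hmaps : Set.MapsTo g P P) (hinj : Set.InjOn g P) :
    ∃ σ' : Matching M W, (∀ x ∈ P, σ'.μm x = some (s x)) ∧ ∀ x ∉ P, σ'.μm x = σ.μm x := by
  classical
  have hout : ∀ {x y}, x ∈ P → y ∉ P → σ.μm y ≠ some (s x) := fun hx hy h =>
    hy (Option.some.inj (((σ.consistent _ _).mp h).symm.trans (hg _ hx)) ▸ hmaps hx)
  refine ⟨Matching.ofMen (fun x => if x ∈ P then some (s x) else σ.μm x) fun m₁ m₂ w h₁ h₂ => ?_,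
    fun x hx => if_pos hx, fun x hx => if_neg hx⟩
  by_cases d₁ : m₁ ∈ P <;> by_cases d₂ : m₂ ∈ P <;> simp only [d₁, d₂, if_true, if_false] at h₁ h₂
  · have h : s m₁ = s m₂ := Option.some.inj (h₁.trans h₂.symm)
    exact hinj d₁ d₂ (Option.some.inj ((hg m₁ d₁).symm.trans (h ▸ hg m₂ d₂)))
  · exact (hout d₁ d₂ (h₂.trans h₁.symm)).elim
  · exact (hout d₂ d₁ (h₁.trans h₂.symm)).elim
  · exact σ.eq_of_μm_eq_some h₁ h₂

end Matching

namespace SMInstance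
variable {M W : Type*} {C A : SMInstance M W} {m m' : M} {w w' : W}

section Men
variable [DecidableEq W]

theorem mem_of_mPref {o : Option W} (h : C.mPref m w o) : w ∈ C.mpref m := by
  cases o with
  | none => exact h
  | some _ => exact h.1

theorem mPref_irrefl (m : M) (w : W) : ¬ C.mPref m w (some w) :=
  fun h => h.2.elim (· h.1) (lt_irrefl _)

theorem idxOf_lt_of_mPref (h : C.mPref m w (some w')) (hw' : w' ∈ C.mpref m) :
    (C.mpref m).idxOf w < (C.mpref m).idxOf w' :=
  h.2.resolve_left (not_not.mpr hw')

theorem mPref_trans {o : Option W} (h₁ : C.mPref m w (some w')) (h₂ : C.mPref m w' o) :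
    C.mPref m w o := by
  cases o with
  | none => exact h₁.1
  | some _ => exact ⟨h₁.1, h₂.2.imp_right (idxOf_lt_of_mPref h₁ (mem_of_mPref h₂)).trans⟩

theorem mPref_of_mPref_of_mWeak_s15 {o o' : Option W} (h : C.mPref m w o) (h' : C.mWeak m o o') :
    C.mPref m w o' := by
  rcases h' with rfl | ⟨w', rfl, h'⟩
  · exact h
  · exact mPref_trans h h'

theorem mWeak_antisymm {o o' : Option W} (h : C.mWeak m o o') (h' : C.mWeak m o' o) : o = o' := by
  rcases h with h | ⟨w, rfl, h⟩
  · exact h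
  rcases h' with h' | ⟨w', rfl, h'⟩
  · exact h'.symm
  · exact absurd (mPref_trans h h') (mPref_irrefl m w)

theorem mWeak_of_not_mPref {o : Option W} (hw : w ∈ C.mpref m)
    (ho : ∀ w', o = some w' → w' ∈ C.mpref m) (h : ¬ C.mPref m w o) : C.mWeak m o (some w) := by
  cases o with
  | none => exact absurd hw h
  | some w' =>
    rcases lt_trichotomy ((C.mpref m).idxOf w) ((C.mpref m).idxOf w') with hlt | heq | hgt
    · exact absurd ⟨hw, Or.inr hlt⟩ h
    · exact Or.inl (congrArg some ((List.idxOf_inj hw).mp heq).symm)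
    · exact Or.inr ⟨w', rfl, ho w' rfl, Or.inr hgt⟩

theorem mWeak_of_idxOf_le (hw : w ∈ C.mpref m)
    (h : (C.mpref m).idxOf w ≤ (C.mpref m).idxOf w') : C.mWeak m (some w) (some w') := by
  rcases h.lt_or_eq with hlt | heq
  · exact Or.inr ⟨w, rfl, hw, Or.inr hlt⟩
  · exact Or.inl (congrArg some ((List.idxOf_inj hw).mp heq))

theorem mWeak_some_iff (hw' : w' ∈ C.mpref m) :
    C.mWeak m (some w) (some w') ↔ w ∈ C.mpref m ∧ (C.mpref m).idxOf w ≤ (C.mpref m).idxOf w' := by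
  refine ⟨?_, fun h => mWeak_of_idxOf_le h.1 h.2⟩
  rintro (h | ⟨_, h, hpref⟩)
  · cases h
    exact ⟨hw', le_rfl⟩
  · cases h
    exact ⟨hpref.1, (idxOf_lt_of_mPref hpref hw').le⟩

theorem mPref_congr_s15 (h : C.mpref = A.mpref) : C.mPref = A.mPref := by
  funext m w o
  cases o <;> simp [SMInstance.mPref, h]

theorem mWeak_congr (h : C.mpref = A.mpref) : C.mWeak = A.mWeak := by
  funext m o o'
  simp [SMInstance.mWeak, mPref_congr_s15 h]

end Men

section Women
variable [DecidableEq M]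

theorem mem_of_wPref {o : Option M} (h : C.wPref w m o) : m ∈ C.wpref w := by
  cases o with
  | none => exact h
  | some _ => exact h.1

theorem wPref_irrefl (w : W) (m : M) : ¬ C.wPref w m (some m) :=
  fun h => h.2.elim (· h.1) (lt_irrefl _)

theorem idxOf_lt_of_wPref (h : C.wPref w m (some m')) (hm' : m' ∈ C.wpref w) :
    (C.wpref w).idxOf m < (C.wpref w).idxOf m' :=
  h.2.resolve_left (not_not.mpr hm')

theorem wPref_trans {o : Option M} (h₁ : C.wPref w m (some m')) (h₂ : C.wPref w m' o) :
    C.wPref w m o := by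
  cases o with
  | none => exact h₁.1
  | some _ => exact ⟨h₁.1, h₂.2.imp_right (idxOf_lt_of_wPref h₁ (mem_of_wPref h₂)).trans⟩

theorem wPref_asymm (h : C.wPref w m (some m')) : ¬ C.wPref w m' (some m) :=
  fun h' => wPref_irrefl w m (wPref_trans h h')

theorem wPref_of_not_wPref (hm : m ∈ C.wpref w) (hm' : m' ∈ C.wpref w) (hne : m ≠ m')
    (h : ¬ C.wPref w m' (some m)) : C.wPref w m (some m') := by
  rcases lt_trichotomy ((C.wpref w).idxOf m) ((C.wpref w).idxOf m') with hlt | heq | hgt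
  · exact ⟨hm, Or.inr hlt⟩
  · exact absurd ((List.idxOf_inj hm).mp heq) hne
  · exact absurd ⟨hm', Or.inr hgt⟩ h

theorem wPref_congr (h : C.wpref w = A.wpref w) : C.wPref w = A.wPref w := by
  funext m o
  cases o <;> simp [SMInstance.wPref, h]

end Women

end SMInstance

section Comparison
variable {M W : Type*} [DecidableEq W] {C : SMInstance M W}
  {μ ζ σ : Matching M W} {m x : M} {w : W}

def mStrictBetter (I : SMInstance M W) (m : M) (μ₁ μ₂ : Matching M W) : Prop :=
  ∃ w, μ₁.μm m = some w ∧ I.mPref m w (μ₂.μm m)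

def MenWeaklyPrefer (I : SMInstance M W) (μ₁ μ₂ : Matching M W) : Prop :=
  ∀ m, I.mWeak m (μ₁.μm m) (μ₂.μm m)

theorem mWeak_of_not_mStrictBetter (hμ : IndivRational C μ) (hζ : IndivRational C ζ)
    (h : ¬ mStrictBetter C m ζ μ) : C.mWeak m (μ.μm m) (ζ.μm m) := by
  cases hz : ζ.μm m with
  | none =>
    cases hμm : μ.μm m with
    | none => exact Or.inl rfl
    | some w => exact Or.inr ⟨w, rfl, (hμ m w hμm).1⟩
  | some w =>
    exact C.mWeak_of_not_mPref (hζ m w hz).1 (fun w' h' => (hμ m w' h').1)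
      fun hp => h ⟨w, hz, hp⟩

namespace IsStable
variable [DecidableEq M]

theorem not_blocking (hσ : IsStable C σ) (hm : C.mPref m w (σ.μm m))
    (hw : C.wPref w m (σ.μw w)) : False :=
  hσ.2 m w ⟨fun h => C.mPref_irrefl m w (h ▸ hm), hm, hw⟩

theorem exists_wPref_partner (hσ : IsStable C σ) (hmem : m ∈ C.wpref w)
    (h : C.mPref m w (σ.μm m)) : ∃ p, σ.μw w = some p ∧ C.wPref w p (some m) := by
  cases hw : σ.μw w with
  | none => exact (hσ.not_blocking h (by rw [hw]; exact hmem)).elim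
  | some p =>
    have hp : σ.μm p = some w := (σ.consistent p w).mpr hw
    refine ⟨p, rfl, C.wPref_of_not_wPref (hσ.1 p w hp).2 hmem ?_
      fun h' => hσ.not_blocking h (by rw [hw]; exact h')⟩
    rintro rfl
    exact C.mPref_irrefl p w (hp ▸ h)

theorem exists_mPref_partner (hσ : IsStable C σ) (hmem : w ∈ C.mpref m)
    (h : C.wPref w m (σ.μw w)) : ∃ w', σ.μm m = some w' ∧ C.mPref m w' (some w) := by
  rcases C.mWeak_of_not_mPref hmem (fun w' h' => (hσ.1 m w' h').1)
      fun h' => hσ.not_blocking h' h with h' | h'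
  · rw [(σ.consistent m w).mp h'] at h
    exact absurd h (C.wPref_irrefl w m)
  · exact h'

theorem exists_mStrictBetter_rival (hμ : IsStable C μ) (hζ : IsStable C ζ)
    (hx : ζ.μm x = some w) (hpref : C.mPref x w (μ.μm x)) :
    ∃ p, μ.μw w = some p ∧ C.wPref w p (some x) ∧ mStrictBetter C p ζ μ := by
  obtain ⟨p, hp, hwp⟩ := hμ.exists_wPref_partner (hζ.1 x w hx).2 hpref
  have hμp : μ.μm p = some w := (μ.consistent p w).mpr hp
  refine ⟨p, hp, hwp, ?_⟩
  have hnot : ¬ C.mPref p w (ζ.μm p) := fun h =>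
    hζ.not_blocking h (by rw [(ζ.consistent x w).mp hx]; exact hwp)
  rcases C.mWeak_of_not_mPref (hμ.1 p w hμp).1 (fun w' h' => (hζ.1 p w' h').1) hnot with
    h | ⟨w', h, hpref'⟩
  · obtain rfl := ζ.eq_of_μm_eq_some h hx
    exact absurd hwp (C.wPref_irrefl w p)
  · exact ⟨w', h, hμp ▸ hpref'⟩

/-- The men improving from `μ` to `ζ` exchange their partners among themselves: the map sending
such a man to the old partner of his new partner is injective, hence onto. -/
theorem exists_mStrictBetter_gaining [Finite M] (hμ : IsStable C μ) (hζ : IsStable C ζ)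
    (hm : mStrictBetter C m ζ μ) :
    ∃ w, μ.μm m = some w ∧ ∃ z, ζ.μm z = some w ∧ mStrictBetter C z ζ μ := by
  have hF : ∀ z : {z // mStrictBetter C z ζ μ},
      ∃ z' : {z // mStrictBetter C z ζ μ}, ∃ w, ζ.μm z = some w ∧ μ.μw w = some z'.1 := by
    rintro ⟨z, w, hzw, hpref⟩
    obtain ⟨p, hp, -, hpD⟩ := hμ.exists_mStrictBetter_rival hζ hzw hpref
    exact ⟨⟨p, hpD⟩, w, hzw, hp⟩
  choose F g hζg hμg using hF
  have hinj : Function.Injective F := fun z₁ z₂ h => by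
    have hg : g z₁ = g z₂ := μ.eq_of_μw_eq_some (hμg z₁) (by rw [h]; exact hμg z₂)
    exact Subtype.ext (ζ.eq_of_μm_eq_some (hζg z₁) (hg ▸ hζg z₂))
  obtain ⟨z, hz⟩ := Finite.injective_iff_surjective.mp hinj ⟨m, hm⟩
  exact ⟨g z, (μ.consistent _ _).mpr (by rw [hμg z, hz]), z, hζg z, z.2⟩

end IsStable

end Comparison

section Lattice
variable {M W : Type*} [DecidableEq M] [DecidableEq W] {C : SMInstance M W}
  {μ ζ σ : Matching M W} {x : M}

theorem IsStable.of_menBetter [Finite M] (hμ : IsStable C μ) (hζ : IsStable C ζ)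
    (hσζ : ∀ z, mStrictBetter C z ζ μ → σ.μm z = ζ.μm z)
    (hσμ : ∀ z, ¬ mStrictBetter C z ζ μ → σ.μm z = μ.μm z) : IsStable C σ := by
  refine ⟨fun z w h => ?_, fun y w ⟨_, hm, hw⟩ => ?_⟩
  · by_cases hz : mStrictBetter C z ζ μ
    · exact hζ.1 z w ((hσζ z hz).symm.trans h)
    · exact hμ.1 z w ((hσμ z hz).symm.trans h)
  have hmμ : C.mPref y w (μ.μm y) := by
    by_cases hy : mStrictBetter C y ζ μ
    · obtain ⟨w', hw', hpref⟩ := hy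
      rw [hσζ y ⟨w', hw', hpref⟩, hw'] at hm
      exact C.mPref_trans hm hpref
    · rwa [hσμ y hy] at hm
  have hmζ : C.mPref y w (ζ.μm y) := by
    by_cases hy : mStrictBetter C y ζ μ
    · rwa [hσζ y hy] at hm
    · exact C.mPref_of_mPref_of_mWeak_s15 hmμ (mWeak_of_not_mStrictBetter hμ.1 hζ.1 hy)
  cases hσw : σ.μw w with
  | some z =>
    rw [hσw] at hw
    have hz : σ.μm z = some w := (σ.consistent z w).mpr hσw
    by_cases hzD : mStrictBetter C z ζ μ
    · exact hζ.not_blocking hmζ (by rwa [(ζ.consistent z w).mp ((hσζ z hzD).symm.trans hz)])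
    · exact hμ.not_blocking hmμ (by rwa [(μ.consistent z w).mp ((hσμ z hzD).symm.trans hz)])
  | none =>
    rw [hσw] at hw
    refine hμ.not_blocking hmμ ?_
    cases hμw : μ.μw w with
    | none => exact hw
    | some p =>
      have hp : μ.μm p = some w := (μ.consistent p w).mpr hμw
      exfalso
      by_cases hpD : mStrictBetter C p ζ μ
      · obtain ⟨w', hw', z, hz, hzD⟩ := hμ.exists_mStrictBetter_gaining hζ hpD
        obtain rfl : w' = w := Option.some.inj (hw'.symm.trans hp)
        rw [(σ.consistent z w').mp ((hσζ z hzD).trans hz)] at hσw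
        exact absurd hσw (by simp)
      · rw [(σ.consistent p w).mp ((hσμ p hpD).trans hp)] at hσw
        exact absurd hσw (by simp)

theorem IsStable.exists_menWeaklyPrefer [Finite M] (hμ : IsStable C μ) (hζ : IsStable C ζ)
    (hx : mStrictBetter C x ζ μ) :
    ∃ σ, IsStable C σ ∧ MenWeaklyPrefer C σ μ ∧ σ.μm ≠ μ.μm := by
  classical
  let f : M → Option W := fun z => if mStrictBetter C z ζ μ then ζ.μm z else μ.μm z
  have hmix : ∀ {m₁ m₂ w}, mStrictBetter C m₁ ζ μ → ζ.μm m₁ = some w → μ.μm m₂ = some w →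
      mStrictBetter C m₂ ζ μ := by
    rintro m₁ m₂ w ⟨w', h', hpref⟩ h₁ h₂
    obtain rfl : w' = w := Option.some.inj (h'.symm.trans h₁)
    obtain ⟨p, hp, -, hpD⟩ := hμ.exists_mStrictBetter_rival hζ h' hpref
    exact μ.eq_of_μm_eq_some ((μ.consistent _ _).mpr hp) h₂ ▸ hpD
  have hf : ∀ m₁ m₂ w, f m₁ = some w → f m₂ = some w → m₁ = m₂ := by
    intro m₁ m₂ w h₁ h₂
    by_cases d₁ : mStrictBetter C m₁ ζ μ <;> by_cases d₂ : mStrictBetter C m₂ ζ μ <;>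
      simp only [f, d₁, d₂, if_true, if_false] at h₁ h₂
    · exact ζ.eq_of_μm_eq_some h₁ h₂
    · exact absurd (hmix d₁ h₁ h₂) d₂
    · exact absurd (hmix d₂ h₂ h₁) d₁
    · exact μ.eq_of_μm_eq_some h₁ h₂
  let σ := Matching.ofMen f hf
  have hσζ : ∀ z, mStrictBetter C z ζ μ → σ.μm z = ζ.μm z := fun _ hz => if_pos hz
  have hσμ : ∀ z, ¬ mStrictBetter C z ζ μ → σ.μm z = μ.μm z := fun _ hz => if_neg hz
  obtain ⟨w, hxw, hpref⟩ := hx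
  have hσx : σ.μm x = some w := (hσζ x ⟨w, hxw, hpref⟩).trans hxw
  refine ⟨σ, hμ.of_menBetter hζ hσζ hσμ, fun z => ?_, fun h => ?_⟩
  · by_cases hz : mStrictBetter C z ζ μ
    · obtain ⟨w, h, hpref⟩ := hz
      exact Or.inr ⟨w, (hσζ z ⟨w, h, hpref⟩).trans h, hpref⟩
    · exact Or.inl (hσμ z hz)
  · rw [← congrFun h x, hσx] at hpref
    exact C.mPref_irrefl x w hpref

end Lattice

section Rotations
variable {M W : Type*} [DecidableEq M] [DecidableEq W] {C : SMInstance M W}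
  {μ σ : Matching M W} {x : M}

/-- `s` is `x`'s favourite among the women who prefer him to their `σ`-partners: for stable `σ`,
the second entry of `x`'s list in the reduced table of `σ`, the first being `σ(x)`. -/
def IsNextChoice (C : SMInstance M W) (σ : Matching M W) (x : M) (s : W) : Prop :=
  s ∈ C.mpref x ∧ C.wPref s x (σ.μw s) ∧
    ∀ y ∈ C.mpref x, C.wPref y x (σ.μw y) → (C.mpref x).idxOf s ≤ (C.mpref x).idxOf y

/-- `μ` arises from `σ` by eliminating rotations exposed in `σ`. -/
def MovesToNextChoices (C : SMInstance M W) (σ μ : Matching M W) : Prop :=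
  ∀ z, σ.μm z ≠ μ.μm z → ∃ w, μ.μm z = some w ∧ IsNextChoice C σ z w

theorem IsStable.exists_nextChoice [Finite M] (hμ : IsStable C μ) (hσ : IsStable C σ)
    (hdom : MenWeaklyPrefer C σ μ) (hx : mStrictBetter C x σ μ) :
    ∃ s m, IsNextChoice C σ x s ∧ C.mWeak x (some s) (μ.μm x) ∧ σ.μw s = some m ∧
      mStrictBetter C m σ μ := by
  obtain ⟨w₀, hμx, z, hσz, w', hσz', hz⟩ := hμ.exists_mStrictBetter_gaining hσ hx
  obtain rfl : w₀ = w' := Option.some.inj (hσz.symm.trans hσz')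
  obtain ⟨p, hp, hw₀, -⟩ := hμ.exists_mStrictBetter_rival hσ hσz hz
  obtain rfl : x = p := (μ.eq_of_μm_eq_some ((μ.consistent _ _).mpr hp) hμx).symm
  have hw₀x : C.wPref w₀ x (σ.μw w₀) := by rw [(σ.consistent z w₀).mp hσz]; exact hw₀
  obtain ⟨s, hs, hsx, hmin⟩ := List.exists_minimal_idxOf (C.mpref x)
    (fun y => C.wPref y x (σ.μw y)) ⟨w₀, (hμ.1 x w₀ hμx).1, hw₀x⟩
  have hsw₀ : C.mWeak x (some s) (some w₀) :=
    C.mWeak_of_idxOf_le hs (hmin w₀ (hμ.1 x w₀ hμx).1 hw₀x)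
  obtain ⟨q, hq, hqD⟩ : ∃ q, μ.μw s = some q ∧ mStrictBetter C q σ μ := by
    rcases hsw₀ with h | ⟨_, h, hlt⟩
    · cases h
      exact ⟨x, (μ.consistent _ _).mp hμx, hx⟩
    · cases h
      obtain ⟨q, hq, hsq⟩ := hμ.exists_wPref_partner (C.mem_of_wPref hsx) (hμx ▸ hlt)
      refine ⟨q, hq, (hdom q).resolve_left fun h => C.wPref_asymm hsq ?_⟩
      rwa [(σ.consistent q s).mp (h.trans ((μ.consistent q s).mpr hq))] at hsx
  obtain ⟨s', hμq, m, hσm, hm⟩ := hμ.exists_mStrictBetter_gaining hσ hqD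
  obtain rfl : s = s' := Option.some.inj (((μ.consistent _ _).mpr hq).symm.trans hμq)
  exact ⟨s, m, ⟨hs, hsx, hmin⟩, hμx ▸ hsw₀, (σ.consistent _ _).mp hσm, hm⟩

section Reassign
variable {P : Set M} {s : M → W} {g : M → M} {σ' : Matching M W}

/-- Moving the men of `P` to their next choices makes no woman worse off: the woman `s x` trades
her partner `g x` for `x`, whom she prefers, and `g` maps `P` onto itself. -/
theorem wPref_of_wPref_of_reassign (hs : ∀ x ∈ P, IsNextChoice C σ x (s x))
    (hg : ∀ x ∈ P, σ.μw (s x) = some (g x)) (hsurj : Set.SurjOn g P P)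
    (hP' : ∀ x ∈ P, σ'.μm x = some (s x)) (hnP' : ∀ x ∉ P, σ'.μm x = σ.μm x) {y : W}
    (h : C.wPref y x (σ'.μw y)) : C.wPref y x (σ.μw y) := by
  cases h' : σ'.μw y with
  | some m =>
    rw [h'] at h
    have hm : σ'.μm m = some y := (σ'.consistent m y).mpr h'
    by_cases d : m ∈ P
    · obtain rfl : s m = y := Option.some.inj ((hP' m d).symm.trans hm)
      have hsm := (hs m d).2.1
      rw [hg m d] at hsm ⊢
      exact C.wPref_trans h hsm
    · rwa [(σ.consistent m y).mp ((hnP' m d).symm.trans hm)]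
  | none =>
    rw [h'] at h
    cases h'' : σ.μw y with
    | none => exact h
    | some m =>
      refine absurd h' ?_
      by_cases d : m ∈ P
      · obtain ⟨z, hz, rfl⟩ := hsurj d
        obtain rfl : s z = y := σ.eq_of_μw_eq_some (hg z hz) h''
        simp [(σ'.consistent z (s z)).mp (hP' z hz)]
      · simp [(σ'.consistent m y).mp ((hnP' m d).trans ((σ.consistent m y).mpr h''))]

/-- Rotation elimination: moving the men of `P` to their next choices keeps the matching stable. -/
theorem IsStable.of_reassign (hσ : IsStable C σ) (hs : ∀ x ∈ P, IsNextChoice C σ x (s x))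
    (hg : ∀ x ∈ P, σ.μw (s x) = some (g x)) (hsurj : Set.SurjOn g P P)
    (hP' : ∀ x ∈ P, σ'.μm x = some (s x)) (hnP' : ∀ x ∉ P, σ'.μm x = σ.μm x) :
    IsStable C σ' := by
  refine ⟨fun x w h => ?_, fun x y ⟨_, hm, hw⟩ => ?_⟩
  · by_cases hx : x ∈ P
    · obtain rfl : s x = w := Option.some.inj ((hP' x hx).symm.trans h)
      exact ⟨(hs x hx).1, C.mem_of_wPref (hs x hx).2.1⟩
    · exact hσ.1 x w ((hnP' x hx).symm.trans h)
  have hw' := wPref_of_wPref_of_reassign hs hg hsurj hP' hnP' hw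
  by_cases hx : x ∈ P
  · rw [hP' x hx] at hm
    have h₁ := C.idxOf_lt_of_mPref hm (hs x hx).1
    have h₂ := (hs x hx).2.2 y (C.mem_of_mPref hm) hw'
    omega
  · exact hσ.not_blocking (hnP' x hx ▸ hm) hw'

end Reassign

end Rotations

def SMInstance.mRank {M W : Type*} [DecidableEq W] (C : SMInstance M W) (m : M) : Option W → ℕ
  | some w => (C.mpref m).idxOf w
  | none => (C.mpref m).length

namespace SMInstance
variable {M W : Type*} [DecidableEq W] {C : SMInstance M W} {m : M}

theorem mRank_le_length (o : Option W) : C.mRank m o ≤ (C.mpref m).length := by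
  cases o with
  | none => exact le_rfl
  | some w => exact List.idxOf_le_length

theorem mRank_lt_of_mPref {w : W} {o : Option W} (h : C.mPref m w o) :
    C.mRank m (some w) < C.mRank m o := by
  cases o with
  | none => exact List.idxOf_lt_length_iff.mpr h
  | some w' =>
    rcases h.2 with hw' | hlt
    · exact (List.idxOf_lt_length_iff.mpr h.1).trans_eq (List.idxOf_eq_length hw').symm
    · exact hlt

theorem mRank_le_of_mWeak {o o' : Option W} (h : C.mWeak m o o') : C.mRank m o ≤ C.mRank m o' := by
  rcases h with rfl | ⟨w, rfl, h⟩
  · exact le_rfl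
  · exact (mRank_lt_of_mPref h).le

end SMInstance

section Descent
variable {M W : Type*} [DecidableEq M] [DecidableEq W] {C : SMInstance M W}
  {μ σ : Matching M W}

/-- Eliminating all rotations exposed in `σ` along cycles of the next-choice map moves towards
`μ` without overshooting it. -/
theorem IsStable.exists_elimination [Finite M] (hμ : IsStable C μ) (hσ : IsStable C σ)
    (hdom : MenWeaklyPrefer C σ μ) (hne : σ.μm ≠ μ.μm) :
    ∃ σ', IsStable C σ' ∧ MenWeaklyPrefer C σ' μ ∧ MenWeaklyPrefer C σ σ' ∧
      (∃ z, mStrictBetter C z σ σ') ∧ (σ'.μm = μ.μm → MovesToNextChoices C σ μ) := by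
  obtain ⟨x₀, hx₀⟩ := Function.ne_iff.mp hne
  obtain ⟨w₀, -⟩ := (hdom x₀).resolve_left hx₀
  have : Nonempty W := ⟨w₀⟩
  choose! s g hs hsμ hg hgD using fun x (hx : mStrictBetter C x σ μ) =>
    hμ.exists_nextChoice hσ hdom hx
  let D := {x | mStrictBetter C x σ μ}
  have hDg : Set.MapsTo g D D := hgD
  let P := D ∩ Function.periodicPts g
  have hbij := Function.bijOn_inter_periodicPts hDg
  obtain ⟨σ', hP, hnP⟩ := σ.exists_reassign (P := P) (fun x hx => hg x hx.1) hbij.mapsTo hbij.injOn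
  have hσ' := hσ.of_reassign (fun x hx => hs x hx.1) (fun x hx => hg x hx.1) hbij.surjOn hP hnP
  have hworse : ∀ z ∈ P, mStrictBetter C z σ σ' := fun z hz => by
    rw [mStrictBetter, hP z hz]
    exact hσ.exists_mPref_partner (hs z hz.1).1 (hs z hz.1).2.1
  refine ⟨σ', hσ', fun z => ?_, fun z => ?_, ?_, fun h z hz => ?_⟩
  · by_cases hz : z ∈ P
    · rw [hP z hz]; exact hsμ z hz.1
    · rw [hnP z hz]; exact hdom z
  · by_cases hz : z ∈ P
    · exact Or.inr (hworse z hz)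
    · exact Or.inl (hnP z hz).symm
  · obtain ⟨z, hz⟩ := Function.inter_periodicPts_nonempty hDg ((hdom x₀).resolve_left hx₀)
    exact ⟨z, hworse z hz⟩
  · have hzP : z ∈ P := by_contra fun hzP => hz (by rw [← hnP z hzP, h])
    exact ⟨s z, by rw [← h, hP z hzP], hs z hzP.1⟩

theorem IsStable.exists_movesToNextChoices [Fintype M] (hμ : IsStable C μ) (hσ : IsStable C σ)
    (hdom : MenWeaklyPrefer C σ μ) (hne : σ.μm ≠ μ.μm) :
    ∃ τ, IsStable C τ ∧ MenWeaklyPrefer C τ μ ∧ τ.μm ≠ μ.μm ∧ MovesToNextChoices C τ μ := by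
  -- induction on how much the men can still lose
  induction hn : ∑ m, ((C.mpref m).length - C.mRank m (σ.μm m)) using Nat.strong_induction_on
    generalizing σ with
  | _ n ih =>
    obtain ⟨σ', hσ', hdom', hle, ⟨z, w, hz, hpref⟩, hcov⟩ := hμ.exists_elimination hσ hdom hne
    by_cases heq : σ'.μm = μ.μm
    · exact ⟨σ, hσ, hdom, hne, hcov heq⟩
    refine ih _ ?_ hσ' hdom' heq rfl
    rw [← hn]
    refine Finset.sum_lt_sum (fun m _ => ?_) ⟨z, Finset.mem_univ _, ?_⟩
    · have := C.mRank_le_of_mWeak (hle m)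
      omega
    · have h₁ := C.mRank_lt_of_mPref hpref
      have h₂ := C.mRank_le_length (m := z) (σ'.μm z)
      rw [hz]
      omega

end Descent

section Proposals
variable {M W : Type*} [DecidableEq W] {A C : SMInstance M W}
  {μ : Matching M W} {L : Set W} {m a p q : M} {u : W}

theorem proposedToB_iff (hμ : IndivRational A μ) :
    proposedToB A μ m u = true ↔ A.mWeak m (some u) (μ.μm m) := by
  unfold proposedToB
  cases h : μ.μm m with
  | none => simp [SMInstance.mWeak, SMInstance.mPref]
  | some w => simp [A.mWeak_some_iff (hμ m w h).1]

theorem mem_proposals (hμ : IndivRational A μ) :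
    m ∈ proposals A μ u ↔ m ∈ A.wpref u ∧ A.mWeak m (some u) (μ.μm m) := by
  rw [proposals, List.mem_filter, proposedToB_iff hμ]

variable [DecidableEq M]

theorem IsStable.proposals_eq_cons (hμ : IsStable A μ) (hu : μ.μw u = some p) :
    ∃ t, proposals A μ u = p :: t := by
  have hp : μ.μm p = some u := (μ.consistent p u).mpr hu
  refine List.filter_eq_cons_of_forall_idxOf_lt (hμ.1 p u hp).2
    ((proposedToB_iff hμ.1).mpr (Or.inl hp.symm)) fun y hy hfy hyp => ?_
  have hyu : A.mPref y u (μ.μm y) := by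
    rcases (proposedToB_iff hμ.1).mp hfy with h | ⟨_, h, hpref⟩
    · exact absurd (μ.eq_of_μm_eq_some h.symm hp) hyp
    · cases h
      exact hpref
  exact A.idxOf_lt_of_wPref (A.wPref_of_not_wPref (hμ.1 p u hp).2 hy (Ne.symm hyp)
    fun h => hμ.not_blocking hyu (hu ▸ h)) hy

theorem IsStable.of_reorder (hμ : IsStable A μ) (hmp : C.mpref = A.mpref)
    (hwpref : ∀ w ∉ L, C.wpref w = A.wpref w) (hmem : ∀ w m, m ∈ C.wpref w ↔ m ∈ A.wpref w)
    (hpre : ∀ w ∈ L, (proposals A μ w).take 2 <+: C.wpref w) : IsStable C μ := by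
  refine ⟨fun m w h => ⟨hmp ▸ (hμ.1 m w h).1, (hmem w m).mpr (hμ.1 m w h).2⟩,
    fun m w ⟨_, hm, hw⟩ => ?_⟩
  rw [SMInstance.mPref_congr_s15 hmp] at hm
  by_cases hwL : w ∈ L
  · cases hμw : μ.μw w with
    | none => exact hμ.not_blocking hm (by rw [hμw]; exact (hmem w m).mp (C.mem_of_wPref hw))
    | some p =>
      -- `p`, the first proposer, heads the reordered list
      obtain ⟨t, ht⟩ := hμ.proposals_eq_cons hμw
      obtain ⟨r, hr⟩ := hpre w hwL
      rw [ht] at hr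
      rw [hμw] at hw
      have := C.idxOf_lt_of_wPref hw (by rw [← hr]; simp)
      simp [← hr] at this
  · exact hμ.not_blocking hm (by rwa [← SMInstance.wPref_congr (hwpref w hwL)])

/-- Two men ranked below the first proposer `p` force the second proposer `s` into second place
of the reordered list, ahead of the lower one. -/
theorem IsStable.exists_proposer_wPref (hμ : IsStable A μ) (hu : μ.μw u = some p)
    (hpre : (proposals A μ u).take 2 <+: C.wpref u) (ha : a ∈ proposals A μ u)
    (hpa : A.wPref u p (some a)) (hq : q ∈ proposals A μ u) (haq : A.wPref u a (some q)) :
    ∃ s ∈ proposals A μ u, s ≠ p ∧ C.wPref u s (some q) := by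
  obtain ⟨t, ht⟩ := hμ.proposals_eq_cons hu
  have hqp : q ≠ p := by
    rintro rfl
    exact A.wPref_asymm hpa haq
  obtain ⟨s, t, rfl⟩ : ∃ s t', t = s :: t' := by
    cases t with
    | nil =>
      rw [ht, List.mem_singleton] at hq
      exact absurd hq hqp
    | cons s t' => exact ⟨s, t', rfl⟩
  have hsa : (A.wpref u).idxOf s ≤ (A.wpref u).idxOf a :=
    List.idxOf_le_of_filter_eq_cons_cons ht (A.mem_of_wPref haq) (List.mem_filter.mp ha).2
      fun h => A.wPref_irrefl u p (h ▸ hpa)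
  have hsq : s ≠ q := by
    rintro rfl
    have := A.idxOf_lt_of_wPref haq (List.mem_filter.mp hq).1
    omega
  have hsp : s ≠ p := by
    have : (proposals A μ u).Nodup := (A.wnodup u).sublist List.filter_sublist
    rw [ht] at this
    simp at this
    exact fun h => this.1.1 h.symm
  obtain ⟨r, hr⟩ := hpre
  rw [ht] at hr
  refine ⟨s, by rw [ht]; simp, hsp, by rw [← hr]; simp, Or.inr ?_⟩
  rw [← hr]
  simp [List.idxOf_cons_ne _ hsp.symm, List.idxOf_cons_ne _ hqp.symm, List.idxOf_cons_ne _ hsq]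

end Proposals

theorem IsMenOptimal.false_of_movesToNextChoices {M W : Type*} [DecidableEq M] [DecidableEq W]
    {A C : SMInstance M W} {L : Set W} {μ σ : Matching M W} (hopt : IsMenOptimal A μ)
    (hmp : C.mpref = A.mpref) (hwpref : ∀ w ∉ L, C.wpref w = A.wpref w)
    (hmem : ∀ w m, m ∈ C.wpref w ↔ m ∈ A.wpref w)
    (hpre : ∀ w ∈ L, (proposals A μ w).take 2 <+: C.wpref w) (hσ : IsStable C σ)
    (hdom : MenWeaklyPrefer C σ μ) (hne : σ.μm ≠ μ.μm) (hcov : MovesToNextChoices C σ μ) :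
    False := by
  have hdomA : MenWeaklyPrefer A σ μ := fun z => SMInstance.mWeak_congr hmp ▸ hdom z
  have hblock : ∀ {a u}, A.mPref a u (σ.μm a) → C.wPref u a (σ.μw u) → False := fun ha hu =>
    hσ.not_blocking (by rwa [SMInstance.mPref_congr_s15 hmp]) hu
  obtain ⟨a, u, -, haσ, huσ⟩ : ∃ a u, BlockingPair A σ a u := by
    by_contra! h
    exact hne (funext fun z => A.mWeak_antisymm (hdomA z)
      (hopt.2 σ ⟨fun m w h' => ⟨hmp ▸ (hσ.1 m w h').1, (hmem w m).mp (hσ.1 m w h').2⟩, h⟩ z))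
  have hu : u ∈ L := by
    by_contra hu
    exact hblock haσ (by rwa [SMInstance.wPref_congr (hwpref u hu)])
  have haμ : A.mPref a u (μ.μm a) := A.mPref_of_mPref_of_mWeak_s15 haσ (hdomA a)
  obtain ⟨p, hp, hpa⟩ := hopt.1.exists_wPref_partner (A.mem_of_wPref huσ) haμ
  obtain ⟨q, hq⟩ : ∃ q, σ.μw u = some q := by
    cases hq : σ.μw u with
    | some q => exact ⟨q, rfl⟩
    | none => exact (hblock haσ (by rw [hq]; exact (hmem u a).mpr (A.mem_of_wPref huσ))).elim
  rw [hq] at huσ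
  have hσq : σ.μm q = some u := (σ.consistent q u).mpr hq
  obtain ⟨s, hs, hsp, hsq⟩ := hopt.1.exists_proposer_wPref hp (hpre u hu)
    ((mem_proposals hopt.1.1).mpr ⟨A.mem_of_wPref huσ, Or.inr ⟨u, rfl, haμ⟩⟩) hpa
    ((mem_proposals hopt.1.1).mpr ⟨(hmem u q).mp (hσ.1 q u hσq).2, hσq ▸ hdomA q⟩) huσ
  -- `s` proposed to `u` but, not blocking `σ` with her, has improved beyond her
  have hsμ : A.mPref s u (μ.μm s) := by
    rcases ((mem_proposals hopt.1.1).mp hs).2 with h | ⟨_, h, hpref⟩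
    · exact absurd (Option.some.inj (((μ.consistent s u).mp h.symm).symm.trans hp)) hsp
    · cases h
      exact hpref
  have hsσ : ¬ A.mPref s u (σ.μm s) := fun h => hblock h (by rw [hq]; exact hsq)
  obtain ⟨w, hw, hnext⟩ := hcov s fun h => hsσ (h ▸ hsμ)
  rw [hw] at hsμ
  have h₁ := A.idxOf_lt_of_mPref hsμ (hmp ▸ hnext.1)
  have h₂ := hnext.2.2 u (hmp ▸ A.mem_of_mPref hsμ) (by rw [hq]; exact hsq)
  rw [hmp] at h₂
  omega

theorem reduced_proposal_list_general {M W : Type*} [DecidableEq M] [DecidableEq W]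
    [Fintype M] (I I' I'' : SMInstance M W) (L : Set W) (μ : Matching M W)
    (hP : PermManip I I' L) (hopt : IsMenOptimal I' μ)
    (hM : I''.mpref = I.mpref)
    (hN : ∀ w ∉ L, I''.wpref w = I.wpref w)
    (hL : ∀ w ∈ L, ((proposals I' μ w).take 2) <+: I''.wpref w ∧
          (I''.wpref w).Perm (I'.wpref w)) :
    IsMenOptimal I'' μ := by
  have hmp : I''.mpref = I'.mpref := hM.trans hP.1.1.symm
  have hwpref : ∀ w ∉ L, I''.wpref w = I'.wpref w := fun w hw => (hN w hw).trans (hP.1.2 w hw).symm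
  have hmem : ∀ w m, m ∈ I''.wpref w ↔ m ∈ I'.wpref w := fun w m => by
    by_cases hw : w ∈ L
    · exact (hL w hw).2.mem_iff
    · rw [hwpref w hw]
  have hpre : ∀ w ∈ L, (proposals I' μ w).take 2 <+: I''.wpref w := fun w hw => (hL w hw).1
  have hμ : IsStable I'' μ := hopt.1.of_reorder hmp hwpref hmem hpre
  refine ⟨hμ, fun ζ hζ m => mWeak_of_not_mStrictBetter hμ.1 hζ.1 fun hm => ?_⟩
  obtain ⟨σ, hσ, hdom, hne⟩ := hμ.exists_menWeaklyPrefer hζ hm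
  obtain ⟨τ, hτ, hdom', hne', hcov⟩ := hμ.exists_movesToNextChoices hσ hdom hne
  exact hopt.false_of_movesToNextChoices hmp hwpref hmem hpre hτ hdom' hne' hcov

/-- moving the top two entries of each manipulator's received-proposal
list to the top of her reported list (and ordering the remaining men arbitrarily)
induces the same matching. -/
theorem reduced_proposal_list {M W : Type*} [DecidableEq M] [DecidableEq W]
    [Fintype M] [Fintype W] (I I' I'' : SMInstance M W) (L : Set W) (μ : Matching M W)
    (hP : PermManip I I' L) (hopt : IsMenOptimal I' μ) (hstab : IsStable I μ)
    (hM : I''.mpref = I.mpref)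
    (hN : ∀ w ∉ L, I''.wpref w = I.wpref w)
    (hL : ∀ w ∈ L, ((proposals I' μ w).take 2) <+: I''.wpref w ∧
          (I''.wpref w).Perm (I'.wpref w)) :
    IsMenOptimal I'' μ :=
  reduced_proposal_list_general I I' I'' L μ hP hopt hM hN hL
end

section
/- Given a coalition of lying women using general manipulations in the men-proposing Gale-Shapley algorithm, if no lying woman is matched worse than under truthful reporting, then no woman at all is matched worse and no man is matched better. -/
open List

/-!
Let `S` be the set of men who strictly prefer their `μ'`-partner to their `μ`-partner. If `m ∈ S`
is matched to `w` in `μ'`, stability of `μ` forces `w` to truly prefer her `μ`-partner `p` to `m`;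
hence `w` is truthful (no liar is worse off), and as `(p, w)` does not block `μ'`, also `p ∈ S`.
So `m ↦ μ(μ'(m))` maps the finite set `S` injectively into itself, and the men of `S` have the
same partners in `μ` and `μ'`. Matching `S` as in `μ'` and everyone else as in `μ` then yields a
matching that is stable for the true preferences and better than `μ` for the men of `S`, which
contradicts the men-optimality of `μ` unless `S = ∅`. A truthful woman worse off in `μ'` would,
by the same argument, have her `μ`-partner in `S`.
-/

section Rank

variable {α : Type*} [DecidableEq α]

/-- `List.idxOf` of an element missing from `l` is `l.length`, so being unmatched ranks
like an unacceptable partner. -/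
def optRank (l : List α) : Option α → ℕ
  | some a => l.idxOf a
  | none => l.length

theorem optRank_le_length (l : List α) : ∀ o, optRank l o ≤ l.length
  | some _ => List.idxOf_le_length
  | none => le_rfl

theorem exists_eq_some_of_optRank_lt {l : List α} {o o' : Option α}
    (h : optRank l o < optRank l o') : ∃ a, o = some a := by
  cases o with
  | some a => exact ⟨a, rfl⟩
  | none => exact absurd (optRank_le_length l o') (not_le.2 h)

theorem eq_of_optRank_eq {l : List α} {o₁ o₂ : Option α} (h₁ : ∀ a ∈ o₁, a ∈ l)
    (h₂ : ∀ a ∈ o₂, a ∈ l) (h : optRank l o₁ = optRank l o₂) : o₁ = o₂ := by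
  cases o₁ with
  | some a =>
    cases o₂ with
    | some b => exact congrArg some ((List.idxOf_inj (h₁ a rfl)).1 h)
    | none => exact absurd (h₁ a rfl) (List.idxOf_eq_length_iff.1 h)
  | none =>
    cases o₂ with
    | some b => exact absurd (h₂ b rfl) (List.idxOf_eq_length_iff.1 h.symm)
    | none => rfl

theorem optRank_lt_of_le_of_ne {l : List α} {o₁ o₂ : Option α} (h₁ : ∀ a ∈ o₁, a ∈ l)
    (h₂ : ∀ a ∈ o₂, a ∈ l) (hle : optRank l o₁ ≤ optRank l o₂) (hne : o₁ ≠ o₂) :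
    optRank l o₁ < optRank l o₂ :=
  hle.lt_of_ne fun h => hne (eq_of_optRank_eq h₁ h₂ h)

end Rank

namespace SMInstance

variable {M W : Type*}

abbrev mRank_s17 [DecidableEq W] (I : SMInstance M W) (m : M) : Option W → ℕ := optRank (I.mpref m)

abbrev wRank [DecidableEq M] (I : SMInstance M W) (w : W) : Option M → ℕ := optRank (I.wpref w)

section Men

variable [DecidableEq W] {I : SMInstance M W} {m : M} {o₁ o₂ : Option W}

theorem mPref_iff {w : W} : I.mPref m w o₁ ↔ I.mRank_s17 m (some w) < I.mRank_s17 m o₁ := by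
  cases o₁ with
  | some w' =>
    have := (I.mpref m).idxOf_le_length (a := w)
    have := (I.mpref m).idxOf_le_length (a := w')
    simp only [mPref, optRank, ← List.idxOf_lt_length_iff]
    omega
  | none => exact List.idxOf_lt_length_iff.symm

theorem mRank_le_of_mWeak_s17 (h : I.mWeak m o₁ o₂) : I.mRank_s17 m o₁ ≤ I.mRank_s17 m o₂ := by
  rcases h with rfl | ⟨w, rfl, hw⟩
  exacts [le_rfl, (mPref_iff.1 hw).le]

theorem mWeak_of_mRank_le (h₁ : ∀ w ∈ o₁, w ∈ I.mpref m) (h₂ : ∀ w ∈ o₂, w ∈ I.mpref m)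
    (h : I.mRank_s17 m o₁ ≤ I.mRank_s17 m o₂) : I.mWeak m o₁ o₂ := by
  rcases h.lt_or_eq with hlt | heq
  · obtain ⟨w, rfl⟩ := exists_eq_some_of_optRank_lt hlt
    exact Or.inr ⟨w, rfl, mPref_iff.2 hlt⟩
  · exact Or.inl (eq_of_optRank_eq h₁ h₂ heq)

end Men

section Women

variable [DecidableEq M] {I : SMInstance M W} {w : W} {o₁ o₂ : Option M}

theorem wPref_iff {m : M} : I.wPref w m o₁ ↔ I.wRank w (some m) < I.wRank w o₁ := by
  cases o₁ with
  | some m' =>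
    have := (I.wpref w).idxOf_le_length (a := m)
    have := (I.wpref w).idxOf_le_length (a := m')
    simp only [wPref, optRank, ← List.idxOf_lt_length_iff]
    omega
  | none => exact List.idxOf_lt_length_iff.symm

theorem wRank_le_of_wWeak (h : I.wWeak w o₁ o₂) : I.wRank w o₁ ≤ I.wRank w o₂ := by
  rcases h with rfl | ⟨m, rfl, hm⟩
  exacts [le_rfl, (wPref_iff.1 hm).le]

theorem wWeak_of_wRank_le (h₁ : ∀ m ∈ o₁, m ∈ I.wpref w) (h₂ : ∀ m ∈ o₂, m ∈ I.wpref w)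
    (h : I.wRank w o₁ ≤ I.wRank w o₂) : I.wWeak w o₁ o₂ := by
  rcases h.lt_or_eq with hlt | heq
  · obtain ⟨m, rfl⟩ := exists_eq_some_of_optRank_lt hlt
    exact Or.inr ⟨m, rfl, wPref_iff.2 hlt⟩
  · exact Or.inl (eq_of_optRank_eq h₁ h₂ heq)

theorem mem_wpref_of_wWeak (h : I.wWeak w o₁ o₂) (h₂ : ∀ m ∈ o₂, m ∈ I.wpref w) :
    ∀ m ∈ o₁, m ∈ I.wpref w := by
  rcases h with rfl | ⟨m, rfl, hm⟩
  · exact h₂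
  · intro m' hm'
    obtain rfl := Option.mem_some_iff.1 hm'
    exact List.idxOf_lt_length_iff.1 ((wPref_iff.1 hm).trans_le (optRank_le_length _ o₂))

end Women

end SMInstance

namespace Matching

variable {M W : Type*}

def partners (μ : Matching M W) (S : Set M) : Set W :=
  {w | ∃ m ∈ S, μ.μm m = some w}

/-- `m ↦ μ(μ'(m))` is an injection of the finite set `S` into itself, hence onto. -/
theorem partners_eq_of_forall_exists {μ μ' : Matching M W} {S : Set M} (hS : S.Finite)
    (h : ∀ m ∈ S, ∃ w, μ'.μm m = some w ∧ ∃ p ∈ S, μ.μw w = some p) :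
    μ'.partners S = μ.partners S := by
  let g : M → M := fun m => ((μ'.μm m).bind μ.μw).getD m
  have hg : ∀ m ∈ S, g m ∈ S ∧ ∃ w, μ'.μm m = some w ∧ μ.μw w = some (g m) := by
    intro m hm
    obtain ⟨w, hw, p, hp, hpw⟩ := h m hm
    simp only [g, hw, Option.bind_some, hpw, Option.getD_some]
    exact ⟨hp, w, rfl, hpw⟩
  have hinj : Set.InjOn g S := fun m₁ h₁ m₂ h₂ he => by
    obtain ⟨-, w₁, hw₁, hg₁⟩ := hg m₁ h₁
    obtain ⟨-, w₂, hw₂, hg₂⟩ := hg m₂ h₂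
    obtain rfl := μ.eq_of_μw_eq_some hg₁ (he ▸ hg₂)
    exact μ'.eq_of_μm_eq_some hw₁ hw₂
  have hsurj : Set.SurjOn g S S :=
    ((hS.injOn_iff_bijOn_of_mapsTo fun m hm => (hg m hm).1).1 hinj).surjOn
  ext w
  constructor
  · rintro ⟨m, hm, hw⟩
    obtain ⟨hgm, w', hw', hg'⟩ := hg m hm
    obtain rfl := Option.some_inj.1 (hw'.symm.trans hw)
    exact ⟨g m, hgm, (μ.consistent _ _).2 hg'⟩
  · rintro ⟨m, hm, hw⟩
    obtain ⟨m₁, hm₁, rfl⟩ := hsurj hm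
    obtain ⟨-, w₁, hw₁, hg₁⟩ := hg m₁ hm₁
    obtain rfl := Option.some_inj.1 (((μ.consistent _ _).2 hg₁).symm.trans hw)
    exact ⟨m₁, hm₁, hw₁⟩

open Classical in
noncomputable def piecewise (μ' μ : Matching M W) (S : Set M)
    (h : μ'.partners S = μ.partners S) : Matching M W where
  μm m := if m ∈ S then μ'.μm m else μ.μm m
  μw w := if w ∈ μ'.partners S then μ'.μw w else μ.μw w
  consistent m w := by
    by_cases hm : m ∈ S <;> by_cases hw : w ∈ μ'.partners S <;> simp only [hm, hw, if_true,
      if_false]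
    · exact μ'.consistent m w
    · exact iff_of_false (fun h' => hw ⟨m, hm, h'⟩)
        fun h' => hw (h ▸ ⟨m, hm, (μ.consistent m w).2 h'⟩)
    · obtain ⟨m₂, hm₂, hw₂⟩ : w ∈ μ.partners S := h ▸ hw
      obtain ⟨m₁, hm₁, hw₁⟩ := hw
      exact iff_of_false (fun h' => hm (μ.eq_of_μm_eq_some h' hw₂ ▸ hm₂))
        fun h' => hm (μ'.eq_of_μm_eq_some ((μ'.consistent m w).2 h') hw₁ ▸ hm₁)
    · exact μ.consistent m w

end Matching

namespace IndivRational

variable {M W : Type*} {I : SMInstance M W} {μ : Matching M W}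

theorem mem_mpref (h : IndivRational I μ) (m : M) : ∀ w ∈ μ.μm m, w ∈ I.mpref m :=
  fun w hw => (h m w hw).1

theorem mem_wpref (h : IndivRational I μ) (w : W) : ∀ m ∈ μ.μw w, m ∈ I.wpref w :=
  fun m hm => (h m w ((μ.consistent m w).2 hm)).2

end IndivRational

section Stability

variable {M W : Type*} [DecidableEq M] [DecidableEq W] {I : SMInstance M W}
  {μ μ' : Matching M W}

theorem blockingPair_iff {m : M} {w : W} :
    BlockingPair I μ m w ↔
      I.mRank_s17 m (some w) < I.mRank_s17 m (μ.μm m) ∧ I.wRank w (some m) < I.wRank w (μ.μw w) := by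
  rw [BlockingPair, SMInstance.mPref_iff, SMInstance.wPref_iff, and_iff_right_of_imp]
  rintro ⟨h, -⟩ he
  rw [he] at h
  exact lt_irrefl _ h

theorem not_blockingPair_iff {m : M} {w : W} :
    ¬ BlockingPair I μ m w ↔
      I.mRank_s17 m (μ.μm m) ≤ I.mRank_s17 m (some w) ∨ I.wRank w (μ.μw w) ≤ I.wRank w (some m) := by
  rw [blockingPair_iff, not_and_or, not_lt, not_lt]

theorem blockingPair_congr {I' : SMInstance M W} {m : M} {w : W}
    (hm : I'.mpref m = I.mpref m) (hw : I'.wpref w = I.wpref w) :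
    BlockingPair I' μ m w ↔ BlockingPair I μ m w := by
  simp only [blockingPair_iff, SMInstance.mRank_s17, SMInstance.wRank, hm, hw]

theorem isStable_piecewise {S : Set M} (h : μ'.partners S = μ.partners S) (hμ : IsStable I μ)
    (hIR : IndivRational I μ') (hμ' : ∀ m, ∀ w ∈ μ'.partners S, ¬ BlockingPair I μ' m w)
    (hS : ∀ m ∈ S, I.mRank_s17 m (μ'.μm m) ≤ I.mRank_s17 m (μ.μm m))
    (hSc : ∀ m ∉ S, I.mRank_s17 m (μ.μm m) ≤ I.mRank_s17 m (μ'.μm m)) :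
    IsStable I (μ'.piecewise μ S h) := by
  refine ⟨fun m w hw => ?_, fun m w => ?_⟩
  · by_cases hm : m ∈ S <;> simp only [Matching.piecewise, hm, if_true, if_false] at hw
    exacts [hIR m w hw, hμ.1 m w hw]
  · have hμ_mw := not_blockingPair_iff.1 (hμ.2 m w)
    have hμ'_mw := fun hw => not_blockingPair_iff.1 (hμ' m w hw)
    rw [not_blockingPair_iff]
    by_cases hm : m ∈ S <;> by_cases hw : w ∈ μ'.partners S <;>
      simp only [Matching.piecewise, hm, hw, if_true, if_false]
    · exact hμ'_mw hw
    · have := hS m hm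
      omega
    · have := hμ'_mw hw
      have := hSc m hm
      omega
    · exact hμ_mw

def improvingMen (I : SMInstance M W) (μ μ' : Matching M W) : Set M :=
  {m | I.mRank_s17 m (μ'.μm m) < I.mRank_s17 m (μ.μm m)}

theorem IsStable.wRank_lt_of_mem_improvingMen (hμ : IsStable I μ) (hIR : IndivRational I μ')
    {m : M} {w : W} (hm : m ∈ improvingMen I μ μ') (hw : μ'.μm m = some w) :
    I.wRank w (μ.μw w) < I.wRank w (μ'.μw w) := by
  have hm' : I.mRank_s17 m (some w) < I.mRank_s17 m (μ.μm m) := hw ▸ hm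
  have hle := (not_blockingPair_iff.1 (hμ.2 m w)).resolve_left (not_le.2 hm')
  rw [← (μ'.consistent m w).1 hw] at hle
  refine optRank_lt_of_le_of_ne (hμ.1.mem_wpref w) (hIR.mem_wpref w) hle fun he => ?_
  rw [(μ.consistent m w).2 (he.trans ((μ'.consistent m w).1 hw))] at hm'
  exact lt_irrefl _ hm'

theorem mem_improvingMen_of_wRank_lt (hIR : IndivRational I μ) (hIR' : IndivRational I μ')
    {p : M} {w : W} (hnb : ¬ BlockingPair I μ' p w) (hp : μ.μw w = some p)
    (h : I.wRank w (some p) < I.wRank w (μ'.μw w)) : p ∈ improvingMen I μ μ' := by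
  have hpw : μ.μm p = some w := (μ.consistent p w).2 hp
  have hle := (not_blockingPair_iff.1 hnb).resolve_right (not_le.2 h)
  rw [← hpw] at hle
  refine optRank_lt_of_le_of_ne (hIR'.mem_mpref p) (hIR.mem_mpref p) hle fun he => ?_
  rw [(μ'.consistent p w).1 (he.trans hpw)] at h
  exact lt_irrefl _ h

theorem improvingMen_eq_empty [Finite M] {L : Set W} (hμ : IsMenOptimal I μ)
    (hIR : IndivRational I μ') (hμ' : ∀ m, ∀ w ∉ L, ¬ BlockingPair I μ' m w)
    (hL : ∀ w ∈ L, I.wWeak w (μ'.μw w) (μ.μw w)) : improvingMen I μ μ' = ∅ := by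
  set S := improvingMen I μ μ'
  have htruthful : ∀ m ∈ S, ∀ w, μ'.μm m = some w → w ∉ L := fun m hm w hw hwL =>
    (hμ.1.wRank_lt_of_mem_improvingMen hIR hm hw).not_ge (I.wRank_le_of_wWeak (hL w hwL))
  have hclosed : ∀ m ∈ S, ∃ w, μ'.μm m = some w ∧ ∃ p ∈ S, μ.μw w = some p := by
    intro m hm
    obtain ⟨w, hw⟩ := exists_eq_some_of_optRank_lt hm
    have hlt := hμ.1.wRank_lt_of_mem_improvingMen hIR hm hw
    obtain ⟨p, hp⟩ := exists_eq_some_of_optRank_lt hlt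
    refine ⟨w, hw, p, ?_, hp⟩
    exact mem_improvingMen_of_wRank_lt hμ.1.1 hIR (hμ' p w (htruthful m hm w hw)) hp (hp ▸ hlt)
  have hsame := Matching.partners_eq_of_forall_exists S.toFinite hclosed
  have hν := isStable_piecewise hsame hμ.1 hIR
    (fun m w ⟨m₁, hm₁, hw⟩ => hμ' m w (htruthful m₁ hm₁ w hw)) (fun _ hm => hm.le)
    (fun _ hm => not_lt.1 hm)
  refine Set.eq_empty_of_forall_notMem fun m hm => ?_
  have := I.mRank_le_of_mWeak_s17 (hμ.2 _ hν m)
  simp only [Matching.piecewise, hm, if_true] at this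
  exact hm.not_ge this

theorem wRank_le_of_improvingMen_eq_empty (hIR : IndivRational I μ)
    (hIR' : IndivRational I μ') (hS : improvingMen I μ μ' = ∅) {w : W}
    (hw : ∀ m, ¬ BlockingPair I μ' m w) : I.wRank w (μ'.μw w) ≤ I.wRank w (μ.μw w) := by
  by_contra! hlt
  obtain ⟨p, hp⟩ := exists_eq_some_of_optRank_lt hlt
  exact Set.eq_empty_iff_forall_notMem.1 hS p
    (mem_improvingMen_of_wRank_lt hIR hIR' (hw p) hp (hp ▸ hlt))

end Stability

theorem sisterhood_general {M W : Type*} [DecidableEq M] [DecidableEq W]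
    [Fintype M] (I I' : SMInstance M W) (L : Set W) (μ μ' : Matching M W)
    (hG : GeneralManip I I' L)
    (hμ : IsMenOptimal I μ) (hμ' : IsMenOptimal I' μ')
    (hyp : ∀ w ∈ L, I.wWeak w (μ'.μw w) (μ.μw w)) :
    (∀ w, I.wWeak w (μ'.μw w) (μ.μw w)) ∧ (∀ m, I.mWeak m (μ.μm m) (μ'.μm m)) := by
  obtain ⟨hmpref, hwpref⟩ := hG
  have hIR : IndivRational I μ' := fun m w h => by
    refine ⟨hmpref ▸ (hμ'.1.1 m w h).1, ?_⟩
    by_cases hw : w ∈ L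
    · exact SMInstance.mem_wpref_of_wWeak (hyp w hw) (hμ.1.1.mem_wpref w) m
        ((μ'.consistent m w).1 h)
    · exact hwpref w hw ▸ (hμ'.1.1 m w h).2
  have hunblocked : ∀ m, ∀ w ∉ L, ¬ BlockingPair I μ' m w := fun m w hw =>
    (blockingPair_congr (congrFun hmpref m) (hwpref w hw)).not.1 (hμ'.1.2 m w)
  have hS := improvingMen_eq_empty hμ hIR hunblocked hyp
  refine ⟨fun w => ?_, fun m => ?_⟩
  · by_cases hw : w ∈ L
    · exact hyp w hw
    · exact I.wWeak_of_wRank_le (hIR.mem_wpref w) (hμ.1.1.mem_wpref w)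
        (wRank_le_of_improvingMen_eq_empty hμ.1.1 hIR hS fun m => hunblocked m w hw)
  · exact I.mWeak_of_mRank_le (hμ.1.1.mem_mpref m) (hIR.mem_mpref m)
      (not_lt.1 (Set.eq_empty_iff_forall_notMem.1 hS m))

/-- sisterhood theorem: if no lying woman is worse off, then no
woman is worse off and no man is better off. -/
theorem sisterhood {M W : Type*} [DecidableEq M] [DecidableEq W]
    [Fintype M] [Fintype W] (I I' : SMInstance M W) (L : Set W) (μ μ' : Matching M W)
    (hG : GeneralManip I I' L)
    (hμ : IsMenOptimal I μ) (hμ' : IsMenOptimal I' μ')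
    (hyp : ∀ w ∈ L, I.wWeak w (μ'.μw w) (μ.μw w)) :
    (∀ w, I.wWeak w (μ'.μw w) (μ.μw w)) ∧ (∀ m, I.mWeak m (μ.μm m) (μ'.μm m)) :=
  sisterhood_general I I' L μ μ' hG hμ hμ' hyp
end
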